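/- arXiv:1611.10111 — 11 statements merged into one kernel-verified Lean document; each statement's English description precedes it below -/
import Mathlib

section
/- For all β > 1 and n ≥ 1, the number of β-admissible words of length n satisfies β^n ≤ #Σ_β^n ≤ β^{n+1}/(β-1). -/
open Filter Topology

/-- The β-transformation `T_β x = βx - ⌊βx⌋`. -/
noncomputable def Tb (β : ℝ) (x : ℝ) : ℝ := β * x - ⌊β * x⌋

/-- The (n+1)-st digit `ε_{n+1}(x, β) = ⌊β T_β^{n} x⌋` of the β-expansion of `x`. -/
noncomputable def digit (β : ℝ) (x : ℝ) (n : ℕ) : ℕ := (⌊β * (Tb β)^[n] x⌋).toNat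

/-- Strict lexicographical order on sequences of naturals. -/
def lexLt (a b : ℕ → ℕ) : Prop := ∃ k, (∀ j, j < k → a j = b j) ∧ a k < b k

def lexLe (a b : ℕ → ℕ) : Prop := lexLt a b ∨ a = b

/-- A finite word padded with zeros to an infinite sequence. -/
def pad {n : ℕ} (ω : Fin n → ℕ) : ℕ → ℕ := fun k => if h : k < n then ω ⟨k, h⟩ else 0

/-- The prefix of length `m` of a padded word, again padded with zeros. -/
def trunc {n : ℕ} (ω : Fin n → ℕ) (m : ℕ) : ℕ → ℕ := fun k => if k < m then pad ω k else 0

/-- A word `ω` of length `n` is self-admissible if `σ^i ω ≤_lex (ω_1, …, ω_{n-i})`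
for all `1 ≤ i < n` (comparison after padding with zeros). -/
def selfAdmissible {n : ℕ} (ω : Fin n → ℕ) : Prop :=
  ∀ i, 1 ≤ i → i < n → lexLe (fun k => pad ω (k + i)) (trunc ω (n - i))

/-- Lexicographic order on words of the same length. -/
def wordLt {n : ℕ} (ω ω' : Fin n → ℕ) : Prop := lexLt (pad ω) (pad ω')

def wordLe {n : ℕ} (ω ω' : Fin n → ℕ) : Prop := wordLt ω ω' ∨ ω = ω'

/-- The recurrence time `τ(ω)`: the least `1 ≤ k < n` with
`σ^k(ω_1,…,ω_n) = (ω_1,…,ω_{n-k})`, and `n` if there is no such `k`. -/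
noncomputable def tau {n : ℕ} (ω : Fin n → ℕ) : ℕ :=
  sInf ({k | 1 ≤ k ∧ k < n ∧ ∀ j, j < n - k → pad ω (k + j) = pad ω j} ∪ {n})

/-- The cylinder of the word `ω` in the parameter space `(1, ∞)`. -/
def cylP (n : ℕ) (ω : Fin n → ℕ) : Set ℝ := {β : ℝ | 1 < β ∧ ∀ i : Fin n, digit β 1 i = ω i}

/-- The first `n` digits of the β-expansion of `1`. -/
noncomputable def prefixW (β : ℝ) (n : ℕ) : Fin n → ℕ := fun i => digit β 1 i

/-- The `n`-th recurrence time `τ_n(β)` of `β`. -/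
noncomputable def tauN (β : ℝ) (n : ℕ) : ℕ := tau (prefixW β n)

/-- `t_n(β) = n - ⌊n / τ_n(β)⌋ τ_n(β)`. -/
noncomputable def tN (β : ℝ) (n : ℕ) : ℕ := n - (n / tauN β n) * tauN β n

/-- Left endpoint `β̲_n` of the `n`-th cylinder of `β` in the parameter space. -/
noncomputable def lEnd (β : ℝ) (n : ℕ) : ℝ := sInf (cylP n (prefixW β n))

/-- Right endpoint `β̄_n` of the `n`-th cylinder of `β` in the parameter space. -/
noncomputable def rEnd (β : ℝ) (n : ℕ) : ℝ := sSup (cylP n (prefixW β n))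

/-- The set `Σ_β^n` of β-admissible words of length `n`. -/
def SigmaB (β : ℝ) (n : ℕ) : Set (Fin n → ℕ) :=
  {w | ∃ x : ℝ, 0 ≤ x ∧ x < 1 ∧ ∀ i : Fin n, digit β x i = w i}

open Classical in
/-- The infinite β-expansion `ε*(1, β)` of `1`. -/
noncomputable def epsStar (β : ℝ) : ℕ → ℕ :=
  if h : ∃ m, digit β 1 m ≠ 0 ∧ ∀ k, m < k → digit β 1 k = 0 then
    fun n =>
      if n % (h.choose + 1) = h.choose then digit β 1 h.choose - 1
      else digit β 1 (n % (h.choose + 1))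
  else digit β 1

/-!
Split `[0, 1)` into the cylinders `{x | x begins with w}` of the words `w ∈ Σ_β^n`. The cylinder
of `w` lies in `[v(w), v(w) + β⁻ⁿ)`, where `v(w) = ∑ wᵢ β^{-i}`, and it is an interval with left
end `v(w)`: with `x`, it contains all of `[v(w), x]`. Covering `[0, 1)` by `#Σ_β^n` intervals of
length `β⁻ⁿ` gives `βⁿ ≤ #Σ_β^n`. If `w` extends by a last digit `d`, the points of that extension
are `≥ v(w) + d β^{-(n+1)}`, so the cylinder of `w` contains an interval of that length for its
largest extension digit `m(w)`. These intervals are disjoint, so `∑ m(w) ≤ β^{n+1}`, and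
`#Σ_β^{n+1} ≤ ∑ (m(w) + 1) ≤ β^{n+1} + #Σ_β^n`; summing the geometric series gives the upper bound.
-/

open MeasureTheory Set

namespace BetaExpansion

variable {β x : ℝ}

section Intervals

variable {ι : Type*} (s : Finset ι) (a ℓ : ι → ℝ)

lemma one_le_sum_of_Ico_subset_biUnion (hℓ : ∀ i ∈ s, 0 ≤ ℓ i)
    (h : Ico (0 : ℝ) 1 ⊆ ⋃ i ∈ s, Ico (a i) (a i + ℓ i)) : 1 ≤ ∑ i ∈ s, ℓ i :=
  calc (1 : ℝ) = volume.real (Ico (0 : ℝ) 1) := by simp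
    _ ≤ volume.real (⋃ i ∈ s, Ico (a i) (a i + ℓ i)) :=
      measureReal_mono h (measure_biUnion_lt_top s.finite_toSet fun _ _ => measure_Ico_lt_top).ne
    _ ≤ ∑ i ∈ s, volume.real (Ico (a i) (a i + ℓ i)) := measureReal_biUnion_finset_le _ _
    _ = ∑ i ∈ s, ℓ i := Finset.sum_congr rfl fun i hi => by
      rw [Real.volume_real_Ico_of_le (by linarith [hℓ i hi])]; ring

lemma sum_le_one_of_pairwiseDisjoint_Ico (hℓ : ∀ i ∈ s, 0 ≤ ℓ i)
    (hsub : ∀ i ∈ s, Ico (a i) (a i + ℓ i) ⊆ Ico 0 1)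
    (hd : (s : Set ι).PairwiseDisjoint fun i => Ico (a i) (a i + ℓ i)) : ∑ i ∈ s, ℓ i ≤ 1 :=
  calc ∑ i ∈ s, ℓ i = ∑ i ∈ s, volume.real (Ico (a i) (a i + ℓ i)) :=
      Finset.sum_congr rfl fun i hi => by
        rw [Real.volume_real_Ico_of_le (by linarith [hℓ i hi])]; ring
    _ = volume.real (⋃ i ∈ s, Ico (a i) (a i + ℓ i)) :=
      (measureReal_biUnion_finset hd (fun _ _ => measurableSet_Ico)
        fun _ _ => measure_Ico_lt_top.ne).symm
    _ ≤ volume.real (Ico (0 : ℝ) 1) := measureReal_mono (iUnion₂_subset hsub) measure_Ico_lt_top.ne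
    _ = 1 := by simp

end Intervals

lemma Tb_mem_Ico (β x : ℝ) : Tb β x ∈ Ico (0 : ℝ) 1 :=
  ⟨Int.fract_nonneg _, Int.fract_lt_one _⟩

lemma iterate_Tb_mem_Ico (hx : x ∈ Ico (0 : ℝ) 1) (n : ℕ) : (Tb β)^[n] x ∈ Ico (0 : ℝ) 1 := by
  cases n with
  | zero => exact hx
  | succ n => rw [Function.iterate_succ_apply']; exact Tb_mem_Ico β _

lemma digit_zero (β x : ℝ) : digit β x 0 = ⌊β * x⌋₊ := Int.floor_toNat _

lemma digit_succ (β x : ℝ) (n : ℕ) : digit β x (n + 1) = digit β (Tb β x) n := by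
  simp only [digit, Function.iterate_succ_apply]

lemma Tb_eq_sub_digit (h : 0 ≤ β * x) : Tb β x = β * x - digit β x 0 := by
  rw [digit_zero, natCast_floor_eq_intCast_floor h]; rfl

lemma digit_le_floor (hβ : 0 ≤ β) (hx : x ∈ Ico (0 : ℝ) 1) (n : ℕ) : digit β x n ≤ ⌊β⌋₊ := by
  induction n generalizing x with
  | zero => rw [digit_zero]; exact Nat.floor_le_floor (mul_le_of_le_one_right hβ hx.2.le)
  | succ n ih => rw [digit_succ]; exact ih (Tb_mem_Ico β x)

lemma finite_SigmaB (hβ : 0 ≤ β) (n : ℕ) : (SigmaB β n).Finite :=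
  (finite_Iic fun _ : Fin n => ⌊β⌋₊).subset fun _ ⟨_, hx0, hx1, hw⟩ i =>
    hw i ▸ digit_le_floor hβ ⟨hx0, hx1⟩ i

lemma ncard_SigmaB_zero (β : ℝ) : (SigmaB β 0).ncard = 1 :=
  ncard_eq_one.2 ⟨finZeroElim, eq_singleton_iff_unique_mem.2
    ⟨⟨0, le_rfl, one_pos, finZeroElim⟩, fun _ _ => Subsingleton.elim _ _⟩⟩

def cylinder (β : ℝ) {n : ℕ} (w : Fin n → ℕ) : Set ℝ :=
  {x | 0 ≤ x ∧ x < 1 ∧ ∀ i : Fin n, digit β x i = w i}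

lemma mem_SigmaB_iff {n : ℕ} {w : Fin n → ℕ} : w ∈ SigmaB β n ↔ (cylinder β w).Nonempty :=
  Iff.rfl

lemma cylinder_subset_Ico {n : ℕ} (w : Fin n → ℕ) : cylinder β w ⊆ Ico 0 1 :=
  fun _ hx => ⟨hx.1, hx.2.1⟩

lemma mem_cylinder_succ {n : ℕ} {w : Fin (n + 1) → ℕ} :
    x ∈ cylinder β w ↔
      0 ≤ x ∧ x < 1 ∧ digit β x 0 = w 0 ∧ Tb β x ∈ cylinder β (Fin.tail w) := by
  obtain ⟨hT0, hT1⟩ := Tb_mem_Ico β x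
  simp only [cylinder, mem_ofPred_eq, Fin.forall_fin_succ, Fin.val_zero, Fin.val_succ,
    digit_succ, Fin.tail]
  tauto

lemma cylinder_snoc_subset {n : ℕ} (w : Fin n → ℕ) (d : ℕ) :
    cylinder β (Fin.snoc w d : Fin (n + 1) → ℕ) ⊆ cylinder β w :=
  fun _ ⟨hx0, hx1, hd⟩ => ⟨hx0, hx1, fun i => by simpa using hd i.castSucc⟩

lemma pairwise_disjoint_cylinder (β : ℝ) (n : ℕ) :
    Pairwise fun w w' : Fin n → ℕ => Disjoint (cylinder β w) (cylinder β w') := fun _ _ hne =>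
  disjoint_left.2 fun _ hx hx' => hne (funext fun i => (hx.2.2 i).symm.trans (hx'.2.2 i))

noncomputable def wordValue (β : ℝ) {n : ℕ} (w : Fin n → ℕ) : ℝ :=
  ∑ i : Fin n, (w i : ℝ) / β ^ ((i : ℕ) + 1)

lemma wordValue_nonneg (hβ : 0 ≤ β) {n : ℕ} (w : Fin n → ℕ) : 0 ≤ wordValue β w :=
  Finset.sum_nonneg fun _ _ => by positivity

lemma wordValue_succ {n : ℕ} (w : Fin (n + 1) → ℕ) :
    wordValue β w = (w 0 + wordValue β (Fin.tail w)) / β := by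
  simp only [wordValue, Fin.sum_univ_succ, add_div, Finset.sum_div, div_div, Fin.val_zero,
    Fin.val_succ, pow_succ, pow_zero, one_mul, Fin.tail]

lemma wordValue_snoc {n : ℕ} (w : Fin n → ℕ) (d : ℕ) :
    wordValue β (Fin.snoc w d : Fin (n + 1) → ℕ) = wordValue β w + d / β ^ (n + 1) := by
  simp [wordValue, Fin.sum_univ_castSucc]

lemma eq_wordValue_add_of_mem_cylinder (hβ : 0 < β) {n : ℕ} {w : Fin n → ℕ}
    (hx : x ∈ cylinder β w) : x = wordValue β w + (Tb β)^[n] x / β ^ n := by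
  induction n generalizing x with
  | zero => simp [wordValue]
  | succ n ih =>
    obtain ⟨hx0, -, hd, hT⟩ := mem_cylinder_succ.1 hx
    have hTx := Tb_eq_sub_digit (mul_nonneg hβ.le hx0)
    rw [ih hT, hd] at hTx
    rw [wordValue_succ, Function.iterate_succ_apply, pow_succ, ← div_div, ← add_div,
      eq_div_iff hβ.ne']
    linarith

lemma cylinder_subset_Ico_wordValue (hβ : 0 < β) {n : ℕ} (w : Fin n → ℕ) :
    cylinder β w ⊆ Ico (wordValue β w) (wordValue β w + 1 / β ^ n) := by
  intro x hx
  have hT := iterate_Tb_mem_Ico (β := β) (cylinder_subset_Ico w hx) n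
  have hβn : 0 < β ^ n := by positivity
  rw [eq_wordValue_add_of_mem_cylinder hβ hx]
  constructor
  · linarith [div_nonneg hT.1 hβn.le]
  · linarith [div_lt_div_of_pos_right hT.2 hβn]

lemma Icc_wordValue_subset_cylinder (hβ : 0 < β) {n : ℕ} {w : Fin n → ℕ}
    (hx : x ∈ cylinder β w) : Icc (wordValue β w) x ⊆ cylinder β w := by
  induction n generalizing x with
  | zero => exact fun y hy => ⟨wordValue_nonneg hβ.le w |>.trans hy.1, hy.2.trans_lt hx.2.1, nofun⟩
  | succ n ih =>
    intro y ⟨hwy, hyx⟩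
    obtain ⟨hx0, hx1, hd, hT⟩ := mem_cylinder_succ.1 hx
    rw [wordValue_succ, div_le_iff₀' hβ] at hwy
    have hv := wordValue_nonneg hβ.le (Fin.tail w)
    have hTx := Tb_eq_sub_digit (mul_nonneg hβ.le hx0)
    have hTx1 := (Tb_mem_Ico β x).2
    have hβy : β * y ≤ β * x := mul_le_mul_of_nonneg_left hyx hβ.le
    rw [hd] at hTx
    have hy0 : 0 ≤ β * y := by linarith
    have hdy : digit β y 0 = w 0 := by
      rw [digit_zero, Nat.floor_eq_iff hy0]
      constructor <;> linarith
    refine mem_cylinder_succ.2 ⟨nonneg_of_mul_nonneg_right hy0 hβ, hyx.trans_lt hx1, hdy,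
      ih hT ⟨?_, ?_⟩⟩ <;> rw [Tb_eq_sub_digit hy0, hdy] <;> linarith

lemma Ico_subset_cylinder_of_snoc_mem (hβ : 0 < β) {n : ℕ} {w : Fin n → ℕ} {d : ℕ}
    (h : (Fin.snoc w d : Fin (n + 1) → ℕ) ∈ SigmaB β (n + 1)) :
    Ico (wordValue β w) (wordValue β w + d / β ^ (n + 1)) ⊆ cylinder β w := by
  obtain ⟨x, hx⟩ := h
  have hle := (cylinder_subset_Ico_wordValue hβ _ hx).1
  rw [wordValue_snoc] at hle
  exact Ico_subset_Icc_self.trans <| (Icc_subset_Icc_right hle).trans <|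
    Icc_wordValue_subset_cylinder hβ (cylinder_snoc_subset w d hx)

lemma pow_le_ncard_SigmaB (hβ : 0 < β) (n : ℕ) : β ^ n ≤ (SigmaB β n).ncard := by
  have hfin := finite_SigmaB hβ.le n
  have hcover : Ico (0 : ℝ) 1 ⊆
      ⋃ w ∈ hfin.toFinset, Ico (wordValue β w) (wordValue β w + 1 / β ^ n) := by
    intro x ⟨hx0, hx1⟩
    have hx : x ∈ cylinder β fun i : Fin n => digit β x i := ⟨hx0, hx1, fun _ => rfl⟩
    exact mem_iUnion₂.2 ⟨_, hfin.mem_toFinset.2 ⟨x, hx⟩, cylinder_subset_Ico_wordValue hβ _ hx⟩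
  have h := one_le_sum_of_Ico_subset_biUnion _ _ _ (fun _ _ => by positivity) hcover
  rwa [Finset.sum_const, nsmul_eq_mul, mul_one_div, one_le_div (by positivity),
    ← ncard_eq_toFinset_card _ hfin] at h

noncomputable def maxExtension (β : ℝ) {n : ℕ} (w : Fin n → ℕ) : ℕ :=
  sSup {d | (Fin.snoc w d : Fin (n + 1) → ℕ) ∈ SigmaB β (n + 1)}

lemma bddAbove_extensions (hβ : 0 ≤ β) {n : ℕ} (w : Fin n → ℕ) :
    BddAbove {d | (Fin.snoc w d : Fin (n + 1) → ℕ) ∈ SigmaB β (n + 1)} := by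
  refine ⟨⌊β⌋₊, fun d ⟨x, hx0, hx1, hw⟩ => ?_⟩
  have hd := hw (Fin.last n)
  simp only [Fin.val_last, Fin.snoc_last] at hd
  exact hd ▸ digit_le_floor hβ ⟨hx0, hx1⟩ n

lemma le_maxExtension (hβ : 0 ≤ β) {n : ℕ} {w : Fin n → ℕ} {d : ℕ}
    (h : (Fin.snoc w d : Fin (n + 1) → ℕ) ∈ SigmaB β (n + 1)) : d ≤ maxExtension β w :=
  le_csSup (bddAbove_extensions hβ w) h

lemma snoc_maxExtension_mem (hβ : 0 ≤ β) {n : ℕ} {w : Fin n → ℕ} (hw : w ∈ SigmaB β n) :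
    (Fin.snoc w (maxExtension β w) : Fin (n + 1) → ℕ) ∈ SigmaB β (n + 1) := by
  obtain ⟨x, hx0, hx1, hxw⟩ := hw
  have hext : (Fin.snoc w (digit β x n) : Fin (n + 1) → ℕ) ∈ SigmaB β (n + 1) := by
    refine ⟨x, hx0, hx1, fun i => ?_⟩
    induction i using Fin.lastCases with
    | last => simp
    | cast j => simp [hxw j]
  exact Nat.sSup_mem ⟨_, hext⟩ (bddAbove_extensions hβ w)

lemma ncard_SigmaB_succ_le_sum (hβ : 0 ≤ β) {n : ℕ} (s : Finset (Fin n → ℕ))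
    (hs : SigmaB β n ⊆ s) : (SigmaB β (n + 1)).ncard ≤ ∑ w ∈ s, (maxExtension β w + 1) := by
  classical
  calc (SigmaB β (n + 1)).ncard
      ≤ (s.biUnion fun w => (Finset.range (maxExtension β w + 1)).image (Fin.snoc (α := fun _ => ℕ) w)).card := by
        rw [← ncard_coe_finset]
        refine ncard_le_ncard (fun w' hw' => ?_) (Finset.finite_toSet _)
        rw [← Fin.snoc_init_self w'] at hw' ⊢
        have hinit : Fin.init w' ∈ SigmaB β n :=
          mem_SigmaB_iff.2 ((mem_SigmaB_iff.1 hw').mono (cylinder_snoc_subset _ _))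
        exact Finset.mem_biUnion.2 ⟨_, hs hinit, Finset.mem_image_of_mem _
          (Finset.mem_range_succ_iff.2 (le_maxExtension hβ hw'))⟩
    _ ≤ ∑ w ∈ s, ((Finset.range (maxExtension β w + 1)).image (Fin.snoc (α := fun _ => ℕ) w)).card :=
        Finset.card_biUnion_le
    _ ≤ ∑ w ∈ s, (maxExtension β w + 1) :=
        Finset.sum_le_sum fun w _ => Finset.card_image_le.trans (Finset.card_range _).le

lemma sum_maxExtension_le (hβ : 0 < β) {n : ℕ} (s : Finset (Fin n → ℕ))
    (hs : ↑s ⊆ SigmaB β n) : ∑ w ∈ s, (maxExtension β w : ℝ) ≤ β ^ (n + 1) := by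
  have hsub : ∀ w ∈ s, Ico (wordValue β w) (wordValue β w + maxExtension β w / β ^ (n + 1)) ⊆
      cylinder β w := fun w hw =>
    Ico_subset_cylinder_of_snoc_mem hβ (snoc_maxExtension_mem hβ.le (hs hw))
  have h := sum_le_one_of_pairwiseDisjoint_Ico s (wordValue β)
    (fun w => maxExtension β w / β ^ (n + 1)) (fun _ _ => by positivity)
    (fun w hw => (hsub w hw).trans (cylinder_subset_Ico w))
    (fun w hw w' hw' hne => (pairwise_disjoint_cylinder β n hne).mono (hsub w hw) (hsub w' hw'))
  rwa [← Finset.sum_div, div_le_one (by positivity)] at h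

lemma ncard_SigmaB_succ_le (hβ : 0 < β) (n : ℕ) :
    ((SigmaB β (n + 1)).ncard : ℝ) ≤ β ^ (n + 1) + (SigmaB β n).ncard := by
  have hfin := finite_SigmaB hβ.le n
  have hcard := ncard_SigmaB_succ_le_sum hβ.le hfin.toFinset (by simp)
  have hsum := sum_maxExtension_le hβ hfin.toFinset (by simp)
  rw [ncard_eq_toFinset_card _ hfin]
  calc ((SigmaB β (n + 1)).ncard : ℝ)
      ≤ ∑ w ∈ hfin.toFinset, ((maxExtension β w : ℝ) + 1) := by exact_mod_cast hcard
    _ = ∑ w ∈ hfin.toFinset, (maxExtension β w : ℝ) + hfin.toFinset.card := by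
      rw [Finset.sum_add_distrib, Finset.sum_const, nsmul_one]
    _ ≤ β ^ (n + 1) + hfin.toFinset.card := by linarith

lemma ncard_SigmaB_le_geom_sum (hβ : 0 < β) (n : ℕ) :
    ((SigmaB β n).ncard : ℝ) ≤ ∑ k ∈ Finset.range (n + 1), β ^ k := by
  induction n with
  | zero => simp [ncard_SigmaB_zero]
  | succ n ih => rw [Finset.sum_range_succ]; linarith [ncard_SigmaB_succ_le hβ n]

end BetaExpansion

theorem card_admissible_words_general (β : ℝ) (hβ : 1 < β) (n : ℕ) :
    (SigmaB β n).Finite ∧ β ^ n ≤ ((SigmaB β n).ncard : ℝ) ∧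
      ((SigmaB β n).ncard : ℝ) ≤ β ^ (n + 1) / (β - 1) := by
  have hβ0 : 0 < β := zero_lt_one.trans hβ
  refine ⟨BetaExpansion.finite_SigmaB hβ0.le n, BetaExpansion.pow_le_ncard_SigmaB hβ0 n, ?_⟩
  calc ((SigmaB β n).ncard : ℝ)
      ≤ ∑ k ∈ Finset.range (n + 1), β ^ k := BetaExpansion.ncard_SigmaB_le_geom_sum hβ0 n
    _ = (β ^ (n + 1) - 1) / (β - 1) := geom_sum_eq hβ.ne' (n + 1)
    _ ≤ β ^ (n + 1) / (β - 1) := by gcongr; linarith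

theorem card_admissible_words (β : ℝ) (hβ : 1 < β) (n : ℕ) (hn : 1 ≤ n) :
    (SigmaB β n).Finite ∧ β ^ n ≤ ((SigmaB β n).ncard : ℝ) ∧
      ((SigmaB β n).ncard : ℝ) ≤ β ^ (n + 1) / (β - 1) :=
  card_admissible_words_general β hβ n
end

section
/- The map β ↦ ε*(1,β) from (1,∞) to sequences of nonnegative integers is strictly increasing with respect to the lexicographical order on sequences. -/
open Filter Topology

noncomputable def xSeq (β : ℝ) (n : ℕ) : ℝ := (Tb β)^[n] 1

lemma xSeq_zero (β : ℝ) : xSeq β 0 = 1 := rfl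
lemma xSeq_succ (β : ℝ) (n : ℕ) : xSeq β (n+1) = Tb β (xSeq β n) :=
  Function.iterate_succ_apply' _ _ _

lemma Tb_eq_fract (β x : ℝ) : Tb β x = Int.fract (β * x) := rfl

lemma xSeq_nonneg (β : ℝ) (n : ℕ) : 0 ≤ xSeq β n := by
  cases n with
  | zero => norm_num [xSeq_zero]
  | succ n => rw [xSeq_succ, Tb_eq_fract]; exact Int.fract_nonneg _

lemma xSeq_le_one (β : ℝ) (n : ℕ) : xSeq β n ≤ 1 := by
  cases n with
  | zero => norm_num [xSeq_zero]
  | succ n => rw [xSeq_succ, Tb_eq_fract]; exact le_of_lt (Int.fract_lt_one _)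

lemma digit_def' (β : ℝ) (n : ℕ) : digit β 1 n = (⌊β * xSeq β n⌋).toNat := rfl

lemma digit_real (β : ℝ) (hβ : 0 < β) (n : ℕ) :
    (digit β 1 n : ℝ) = β * xSeq β n - xSeq β (n+1) := by
  have hfl : (0:ℤ) ≤ ⌊β * xSeq β n⌋ :=
    Int.floor_nonneg.mpr (mul_nonneg hβ.le (xSeq_nonneg β n))
  rw [digit_def', xSeq_succ]
  show ((⌊β * xSeq β n⌋.toNat : ℤ) : ℝ) = β * xSeq β n - (β * xSeq β n - ⌊β * xSeq β n⌋)
  rw [Int.toNat_of_nonneg hfl]; ring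

lemma digit_le_beta (β : ℝ) (hβ : 0 < β) (n : ℕ) : (digit β 1 n : ℝ) ≤ β := by
  have h1 : (digit β 1 n : ℝ) = β * xSeq β n - xSeq β (n+1) := digit_real β hβ n
  nlinarith [xSeq_le_one β n, xSeq_nonneg β (n+1)]

lemma sum_digit (β : ℝ) (hβ : 1 < β) (k : ℕ) :
    ∑ j ∈ Finset.range k, (digit β 1 j : ℝ) * β⁻¹ ^ (j+1) = 1 - β⁻¹ ^ k * xSeq β k := by
  have hβ0 : (0:ℝ) < β := lt_trans zero_lt_one hβ
  induction k with
  | zero => simp [xSeq_zero]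
  | succ k ih =>
    rw [Finset.sum_range_succ, ih, digit_real β hβ0]
    have hc : β⁻¹ * β = 1 := inv_mul_cancel₀ hβ0.ne'
    have : β⁻¹ ^ (k+1) * β = β⁻¹ ^ k := by
      rw [pow_succ]; rw [mul_assoc, hc, mul_one]
    linear_combination (xSeq β k) * this

lemma xSeq_eq_zero (β : ℝ) (hβ : 1 < β) (m : ℕ)
    (h0 : ∀ k, m < k → digit β 1 k = 0) : xSeq β (m+1) = 0 := by
  have hβ0 : (0:ℝ) < β := lt_trans zero_lt_one hβ
  have hstep : ∀ j, xSeq β (m+1+j) = β ^ j * xSeq β (m+1) := by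
    intro j
    induction j with
    | zero => simp
    | succ j ih =>
      have hd : (digit β 1 (m+1+j) : ℝ) = 0 := by
        rw [h0 (m+1+j) (by omega)]; norm_num
      have := digit_real β hβ0 (m+1+j)
      rw [hd] at this
      have hx : xSeq β (m+1+j+1) = β * xSeq β (m+1+j) := by linarith
      have : m+1+(j+1) = m+1+j+1 := by omega
      rw [this, hx, ih, pow_succ]; ring
  by_contra hne
  have hpos : 0 < xSeq β (m+1) := lt_of_le_of_ne (xSeq_nonneg β (m+1)) (Ne.symm hne)
  obtain ⟨j, hj⟩ := pow_unbounded_of_one_lt ((xSeq β (m+1))⁻¹) hβ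
  have h2 : 1 < β ^ j * xSeq β (m+1) := by
    rw [← inv_mul_cancel₀ hpos.ne']
    exact mul_lt_mul_of_pos_right hj hpos
  have := xSeq_le_one β (m+1+j)
  rw [hstep j] at this
  linarith

lemma finite_bounds (β : ℝ) (hβ : 1 < β) (m : ℕ) (e : ℕ → ℕ)
    (hm1 : digit β 1 m ≠ 0) (hm2 : ∀ k, m < k → digit β 1 k = 0)
    (he : ∀ n, e n = if n % (m+1) = m then digit β 1 m - 1 else digit β 1 (n % (m+1)))
    (k : ℕ) :
    1 - β⁻¹ ^ k ≤ ∑ j ∈ Finset.range k, (e j : ℝ) * β⁻¹ ^ (j+1) ∧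
    ∑ j ∈ Finset.range k, (e j : ℝ) * β⁻¹ ^ (j+1) ≤ 1 := by
  have hβ0 : (0:ℝ) < β := lt_trans zero_lt_one hβ
  have ht0 : (0:ℝ) < β⁻¹ := inv_pos.mpr hβ0
  have ht1 : β⁻¹ < 1 := inv_lt_one_of_one_lt₀ hβ
  have hx : xSeq β (m+1) = 0 := xSeq_eq_zero β hβ m hm2
  have hesmall : ∀ j, j < m → (e j : ℝ) = digit β 1 j := by
    intro j hj
    rw [he j, if_neg, Nat.mod_eq_of_lt (by omega)]
    rw [Nat.mod_eq_of_lt (by omega)]; omega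
  have hem : (e m : ℝ) = (digit β 1 m : ℝ) - 1 := by
    rw [he m, if_pos (Nat.mod_eq_of_lt (by omega))]
    have : 1 ≤ digit β 1 m := Nat.one_le_iff_ne_zero.mpr hm1
    push_cast [this]; ring
  have hper : ∀ n, e (m + 1 + n) = e n := by
    intro n
    rw [he (m+1+n), he n]
    congr 1 <;> rw [Nat.add_comm (m+1) n, Nat.add_mod_right]
  have hsmall_sum : ∀ r, r ≤ m →
      ∑ j ∈ Finset.range r, (e j : ℝ) * β⁻¹ ^ (j+1) = 1 - β⁻¹ ^ r * xSeq β r := by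
    intro r hr
    rw [← sum_digit β hβ r]
    exact Finset.sum_congr rfl fun j hj => by
      rw [hesmall j (by simp at hj; omega)]
  have hSp : ∑ j ∈ Finset.range (m+1), (e j : ℝ) * β⁻¹ ^ (j+1) = 1 - β⁻¹ ^ (m+1) := by
    rw [Finset.sum_range_succ, hsmall_sum m le_rfl, hem]
    have hd := sum_digit β hβ (m+1)
    rw [Finset.sum_range_succ, hx, mul_zero] at hd
    have hdm := sum_digit β hβ m
    linarith
  induction k using Nat.strong_induction_on with
  | _ k ih =>
    rcases lt_trichotomy k (m+1) with hk | hk | hk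
    · have hk' : k ≤ m := by omega
      rw [hsmall_sum k hk']
      have h1 : (0:ℝ) < β⁻¹ ^ k := pow_pos ht0 k
      constructor
      · nlinarith [xSeq_le_one β k]
      · nlinarith [xSeq_nonneg β k]
    · rw [hk, hSp]
      constructor
      · linarith
      · nlinarith [pow_pos ht0 (m+1)]
    · obtain ⟨d, rfl⟩ : ∃ d, k = (m+1) + d := ⟨k - (m+1), by omega⟩
      have hd1 : 1 ≤ d := by omega
      rw [Finset.sum_range_add, hSp]
      have hrw : ∀ j, (e (m+1+j) : ℝ) * β⁻¹ ^ (m+1+j+1)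
          = β⁻¹ ^ (m+1) * ((e j : ℝ) * β⁻¹ ^ (j+1)) := by
        intro j
        rw [hper j]
        rw [show m+1+j+1 = (m+1) + (j+1) by omega, pow_add]
        ring
      rw [Finset.sum_congr rfl fun j _ => hrw j, ← Finset.mul_sum]
      obtain ⟨hlo, hhi⟩ := ih d (by omega)
      have hp1 : (0:ℝ) < β⁻¹ ^ (m+1) := pow_pos ht0 (m+1)
      have hkd : β⁻¹ ^ (m+1) * β⁻¹ ^ d = β⁻¹ ^ (m+1+d) := by rw [← pow_add]
      constructor
      · nlinarith
      · nlinarith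

lemma epsStar_spec (β : ℝ) :
    (∃ m, digit β 1 m ≠ 0 ∧ (∀ k, m < k → digit β 1 k = 0) ∧
      ∀ n, epsStar β n = if n % (m+1) = m then digit β 1 m - 1
        else digit β 1 (n % (m+1)))
    ∨ epsStar β = digit β 1 := by
  by_cases h : ∃ m, digit β 1 m ≠ 0 ∧ ∀ k, m < k → digit β 1 k = 0
  · left
    refine ⟨h.choose, h.choose_spec.1, h.choose_spec.2, fun n => ?_⟩
    unfold epsStar
    rw [dif_pos h]
  · right
    unfold epsStar
    rw [dif_neg h]

lemma epsStar_bounds (β : ℝ) (hβ : 1 < β) (k : ℕ) :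
    1 - β⁻¹ ^ k ≤ ∑ j ∈ Finset.range k, (epsStar β j : ℝ) * β⁻¹ ^ (j+1) ∧
    ∑ j ∈ Finset.range k, (epsStar β j : ℝ) * β⁻¹ ^ (j+1) ≤ 1 := by
  rcases epsStar_spec β with ⟨m, hm1, hm2, he⟩ | he
  · exact finite_bounds β hβ m (epsStar β) hm1 hm2 he k
  · rw [he, sum_digit β hβ k]
    have h1 : (0:ℝ) < β⁻¹ ^ k := pow_pos (inv_pos.mpr (lt_trans zero_lt_one hβ)) k
    constructor
    · nlinarith [xSeq_le_one β k]
    · nlinarith [xSeq_nonneg β k]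

lemma epsStar_le_beta (β : ℝ) (hβ : 1 < β) (n : ℕ) : (epsStar β n : ℝ) ≤ β := by
  have hβ0 : (0:ℝ) < β := lt_trans zero_lt_one hβ
  rcases epsStar_spec β with ⟨m, hm1, hm2, he⟩ | he
  · have : epsStar β n ≤ digit β 1 (n % (m+1)) := by
      rw [he n]; split
      · next h => rw [h]; omega
      · exact le_rfl
    calc (epsStar β n : ℝ) ≤ (digit β 1 (n % (m+1)) : ℝ) := by exact_mod_cast this
      _ ≤ β := digit_le_beta β hβ0 _
  · rw [he]; exact digit_le_beta β hβ0 n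

lemma one_le_digit_zero (β : ℝ) (hβ : 1 < β) : 1 ≤ digit β 1 0 := by
  have : (1:ℤ) ≤ ⌊β * (Tb β)^[0] 1⌋ := by
    rw [Function.iterate_zero_apply]
    exact Int.le_floor.mpr (by push_cast; linarith)
  unfold digit
  omega

lemma one_le_epsStar_zero (β : ℝ) (hβ : 1 < β) : 1 ≤ epsStar β 0 := by
  have hβ0 : (0:ℝ) < β := lt_trans zero_lt_one hβ
  rcases epsStar_spec β with ⟨m, hm1, hm2, he⟩ | he
  · rw [he 0]
    rcases Nat.eq_zero_or_pos m with hm | hm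
    · subst hm
      rw [if_pos (by norm_num)]
      have hx1 : xSeq β 1 = 0 := xSeq_eq_zero β hβ 0 hm2
      have hd : (digit β 1 0 : ℝ) = β := by
        rw [digit_real β hβ0 0, hx1]
        simp [xSeq, Tb]
      have : 1 < (digit β 1 0 : ℝ) := by rw [hd]; exact hβ
      have : 1 < digit β 1 0 := by exact_mod_cast this
      omega
    · have hne : ¬ (0 % (m+1) = m) := by rw [Nat.zero_mod]; omega
      rw [if_neg hne, Nat.zero_mod]
      exact one_le_digit_zero β hβ
  · rw [he]; exact one_le_digit_zero β hβ

lemma summable_weighted (β : ℝ) (hβ : 1 < β) (c : ℕ → ℕ) (B : ℝ)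
    (hc : ∀ n, (c n : ℝ) ≤ B) :
    Summable (fun n => (c n : ℝ) * β⁻¹ ^ (n+1)) := by
  have hβ0 : (0:ℝ) < β := lt_trans zero_lt_one hβ
  have ht0 : (0:ℝ) < β⁻¹ := inv_pos.mpr hβ0
  have ht1 : β⁻¹ < 1 := inv_lt_one_of_one_lt₀ hβ
  have hgeo : Summable (fun n : ℕ => B * (β⁻¹ ^ n * β⁻¹)) :=
    (((summable_geometric_of_lt_one ht0.le ht1).mul_right β⁻¹).mul_left B)
  have hgeo' : Summable (fun n : ℕ => B * β⁻¹ ^ (n+1)) := by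
    simpa only [pow_succ] using hgeo
  refine Summable.of_nonneg_of_le (fun n => ?_) (fun n => ?_) hgeo'
  · positivity
  · exact mul_le_mul_of_nonneg_right (hc n) (by positivity)

lemma tsum_epsStar_le_one (β : ℝ) (hβ : 1 < β) :
    ∑' n, (epsStar β n : ℝ) * β⁻¹ ^ (n+1) ≤ 1 :=
  Summable.tsum_le_of_sum_range_le
    (summable_weighted β hβ _ β (epsStar_le_beta β hβ))
    (fun k => (epsStar_bounds β hβ k).2)

lemma one_le_tsum_epsStar (β : ℝ) (hβ : 1 < β) :
    1 ≤ ∑' n, (epsStar β n : ℝ) * β⁻¹ ^ (n+1) := by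
  have hβ0 : (0:ℝ) < β := lt_trans zero_lt_one hβ
  have ht0 : (0:ℝ) < β⁻¹ := inv_pos.mpr hβ0
  have ht1 : β⁻¹ < 1 := inv_lt_one_of_one_lt₀ hβ
  have hsum := summable_weighted β hβ _ β (epsStar_le_beta β hβ)
  have htend : Tendsto (fun k : ℕ => 1 - β⁻¹ ^ k) atTop (𝓝 (1 - 0)) :=
    tendsto_const_nhds.sub (tendsto_pow_atTop_nhds_zero_of_lt_one ht0.le ht1)
  rw [sub_zero] at htend
  refine le_of_tendsto htend (Filter.Eventually.of_forall fun k => ?_)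
  calc 1 - β⁻¹ ^ k ≤ ∑ j ∈ Finset.range k, (epsStar β j : ℝ) * β⁻¹ ^ (j+1) :=
        (epsStar_bounds β hβ k).1
    _ ≤ ∑' n, (epsStar β n : ℝ) * β⁻¹ ^ (n+1) :=
        Summable.sum_le_tsum _ (fun i _ => by positivity) hsum

lemma lexLt_total (a b : ℕ → ℕ) (h : a ≠ b) : lexLt a b ∨ lexLt b a := by
  classical
  have hne : ∃ k, a k ≠ b k := by
    by_contra hc
    push_neg at hc
    exact h (funext hc)
  have hk : a (Nat.find hne) ≠ b (Nat.find hne) := Nat.find_spec hne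
  have hmin : ∀ j, j < Nat.find hne → a j = b j := fun j hj =>
    not_not.mp (Nat.find_min hne hj)
  rcases lt_or_gt_of_ne hk with hlt | hgt
  · exact Or.inl ⟨Nat.find hne, hmin, hlt⟩
  · exact Or.inr ⟨Nat.find hne, fun j hj => (hmin j hj).symm, hgt⟩

theorem epsStar_strictMono (β₁ β₂ : ℝ) (h1 : 1 < β₁) (h12 : β₁ < β₂) :
    lexLt (epsStar β₁) (epsStar β₂) := by
  by_contra hcon
  have h2 : 1 < β₂ := h1.trans h12
  have hβ₁0 : (0:ℝ) < β₁ := lt_trans zero_lt_one h1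
  have hβ₂0 : (0:ℝ) < β₂ := lt_trans zero_lt_one h2
  have ht2lt1 : β₂⁻¹ < β₁⁻¹ := by
    rw [inv_lt_inv₀ hβ₂0 hβ₁0]; exact h12
  have ht10 : (0:ℝ) < β₁⁻¹ := inv_pos.mpr hβ₁0
  have ht20 : (0:ℝ) < β₂⁻¹ := inv_pos.mpr hβ₂0
  have hSg : Summable (fun n => (epsStar β₁ n : ℝ) * β₂⁻¹ ^ (n+1)) :=
    summable_weighted β₂ h2 _ β₁ (fun n => epsStar_le_beta β₁ h1 n)
  have hSf₁ : Summable (fun n => (epsStar β₁ n : ℝ) * β₁⁻¹ ^ (n+1)) :=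
    summable_weighted β₁ h1 _ β₁ (fun n => epsStar_le_beta β₁ h1 n)
  have hgle : ∀ n, (epsStar β₁ n : ℝ) * β₂⁻¹ ^ (n+1) ≤ (epsStar β₁ n : ℝ) * β₁⁻¹ ^ (n+1) := by
    intro n
    exact mul_le_mul_of_nonneg_left
      (pow_le_pow_left₀ ht20.le ht2lt1.le (n+1)) (Nat.cast_nonneg _)
  have h0lt : (epsStar β₁ 0 : ℝ) * β₂⁻¹ ^ (0+1) < (epsStar β₁ 0 : ℝ) * β₁⁻¹ ^ (0+1) := by
    have ha0 : (1:ℝ) ≤ (epsStar β₁ 0 : ℝ) := by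
      exact_mod_cast one_le_epsStar_zero β₁ h1
    exact mul_lt_mul_of_pos_left (by simpa using ht2lt1) (by linarith)
  have htsumlt : ∑' n, (epsStar β₁ n : ℝ) * β₂⁻¹ ^ (n+1)
      < ∑' n, (epsStar β₁ n : ℝ) * β₁⁻¹ ^ (n+1) := Summable.tsum_lt_tsum hgle h0lt hSg hSf₁
  have hf₁le : ∑' n, (epsStar β₁ n : ℝ) * β₁⁻¹ ^ (n+1) ≤ 1 := tsum_epsStar_le_one β₁ h1
  have hglt1 : ∑' n, (epsStar β₁ n : ℝ) * β₂⁻¹ ^ (n+1) < 1 := lt_of_lt_of_le htsumlt hf₁le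
  by_cases hab : epsStar β₁ = epsStar β₂
  · rw [hab] at hglt1
    have := one_le_tsum_epsStar β₂ h2
    linarith
  · rcases lexLt_total _ _ hab with hlab | hlba
    · exact hcon hlab
    obtain ⟨k, hpre, hk⟩ := hlba
    have hlow := (epsStar_bounds β₂ h2 (k+1)).1
    have hsum_eq : ∑ j ∈ Finset.range (k+1), (epsStar β₂ j : ℝ) * β₂⁻¹ ^ (j+1)
        = (∑ j ∈ Finset.range k, (epsStar β₁ j : ℝ) * β₂⁻¹ ^ (j+1))
          + (epsStar β₂ k : ℝ) * β₂⁻¹ ^ (k+1) := by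
      rw [Finset.sum_range_succ]
      congr 1
      refine Finset.sum_congr rfl fun j hj => ?_
      rw [hpre j (Finset.mem_range.mp hj)]
    have hbk : (epsStar β₂ k : ℝ) + 1 ≤ (epsStar β₁ k : ℝ) := by exact_mod_cast hk
    have hpow : (0:ℝ) < β₂⁻¹ ^ (k+1) := pow_pos ht20 _
    have hch : (1:ℝ) ≤ ∑ j ∈ Finset.range (k+1), (epsStar β₁ j : ℝ) * β₂⁻¹ ^ (j+1) := by
      rw [Finset.sum_range_succ]
      rw [hsum_eq] at hlow
      nlinarith
    have hle := Summable.sum_le_tsum (Finset.range (k+1))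
      (fun i _ => by positivity : ∀ i ∉ Finset.range (k+1), (0:ℝ) ≤ (epsStar β₁ i : ℝ) * β₂⁻¹ ^ (i+1)) hSg
    linarith
end

section
/- For every β > 1 and every i ≥ 1, the shifted sequence σ^i ε*(1,β) is lexicographically less than or equal to ε*(1,β), where σ is the shift map on sequences. -/
open Filter Topology

/-!
Put `r n = T_β^n 1 ∈ [0, 1]`; then `r n = (ε_{n+1} + r (n + 1)) / β`. For two digit sequences
whose remainders satisfy this recurrence and lie in `[0, 1]`, a lexicographically larger sequence
has at least the larger value, because a digit excess of one absorbs any difference of remainders.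
The shift `σ^i` has value `r i < 1 = r 0`, so it cannot be lexicographically larger.
If the expansion of `1` is finite with last nonzero digit `ε_{m+1}`, then `T_β^{m+1} 1 = 0`, so
trading that digit for `ε_{m+1} - 1` and the remainder `0` for `1 = r 0` shows that the periodic
sequence `ε*(1, β)` has the remainders `r (n % (m + 1))`; the same argument applies.
-/

open Function

lemma lexLt_iff_toLex_lt (a b : ℕ → ℕ) : lexLt a b ↔ toLex a < toLex b := Iff.rfl

lemma lexLe_of_not_lexLt {a b : ℕ → ℕ} (h : ¬ lexLt b a) : lexLe a b := by
  rw [lexLt_iff_toLex_lt] at h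
  exact (le_iff_lt_or_eq.1 (not_lt.1 h)).imp id (congrArg ofLex)

section BetaTransformation

variable {β x : ℝ}

lemma Tb_nonneg (β x : ℝ) : 0 ≤ Tb β x := sub_nonneg.2 (Int.floor_le _)

lemma Tb_lt_one (β x : ℝ) : Tb β x < 1 := by
  have := Int.lt_floor_add_one (β * x)
  unfold Tb
  linarith

lemma iterate_Tb_nonneg (hx : 0 ≤ x) (n : ℕ) : 0 ≤ (Tb β)^[n] x := by
  cases n with
  | zero => exact hx
  | succ k => rw [iterate_succ_apply']; exact Tb_nonneg β _

lemma iterate_Tb_lt_one {n : ℕ} (hn : n ≠ 0) : (Tb β)^[n] x < 1 := by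
  obtain ⟨k, rfl⟩ := Nat.exists_eq_succ_of_ne_zero hn
  rw [iterate_succ_apply']
  exact Tb_lt_one β _

lemma iterate_Tb_le_one (hx : x ≤ 1) (n : ℕ) : (Tb β)^[n] x ≤ 1 := by
  rcases eq_or_ne n 0 with rfl | hn
  · exact hx
  · exact (iterate_Tb_lt_one hn).le

lemma digit_cast (hβ : 0 ≤ β) (hx : 0 ≤ x) (n : ℕ) :
    (digit β x n : ℝ) = ⌊β * (Tb β)^[n] x⌋ := by
  have : (0 : ℤ) ≤ ⌊β * (Tb β)^[n] x⌋ :=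
    Int.floor_nonneg.2 (mul_nonneg hβ (iterate_Tb_nonneg hx n))
  rw [digit, ← Int.cast_natCast, Int.toNat_of_nonneg this]

lemma iterate_Tb_succ (hβ : 0 ≤ β) (hx : 0 ≤ x) (n : ℕ) :
    (Tb β)^[n + 1] x = β * (Tb β)^[n] x - digit β x n := by
  rw [iterate_succ_apply', digit_cast hβ hx, Tb]

end BetaTransformation

/-- `u n` plays the role of the value `∑ k, a (n + k) / β ^ (k + 1)` of the tail of `a`. -/
def IsRemainderSeq (β : ℝ) (a : ℕ → ℕ) (u : ℕ → ℝ) : Prop :=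
  ∀ n, u n = (a n + u (n + 1)) / β

namespace IsRemainderSeq

variable {β : ℝ} {a c : ℕ → ℕ} {u v : ℕ → ℝ}

lemma shift (hu : IsRemainderSeq β a u) (i : ℕ) :
    IsRemainderSeq β (fun n => a (n + i)) (fun n => u (n + i)) := fun n => by
  simp only [hu (n + i), Nat.add_right_comm]

lemma eq_sum_add_div (hβ : β ≠ 0) (hu : IsRemainderSeq β a u) (N : ℕ) :
    u 0 = ∑ j ∈ Finset.range N, (a j : ℝ) / β ^ (j + 1) + u N / β ^ N := by
  induction N with
  | zero => simp
  | succ k ih =>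
    rw [Finset.sum_range_succ, ih, hu k, pow_succ]
    field_simp
    ring

lemma le_of_lexLt (hβ : 0 < β) (hu : IsRemainderSeq β a u) (hv : IsRemainderSeq β c v)
    (hu0 : ∀ n, 0 ≤ u n) (hv1 : ∀ n, v n ≤ 1) (h : lexLt c a) : v 0 ≤ u 0 := by
  obtain ⟨k, hpre, hk⟩ := h
  rw [hu.eq_sum_add_div hβ.ne' (k + 1), hv.eq_sum_add_div hβ.ne' (k + 1),
    Finset.sum_range_succ, Finset.sum_range_succ,
    Finset.sum_congr rfl fun j hj => by rw [hpre j (Finset.mem_range.1 hj)]]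
  have hdigit : (c k : ℝ) + v (k + 1) ≤ a k + u (k + 1) := by
    have : (c k : ℝ) + 1 ≤ a k := by exact_mod_cast hk
    linarith [hv1 (k + 1), hu0 (k + 1)]
  have := div_le_div_of_nonneg_right hdigit (pow_pos hβ (k + 1)).le
  rw [add_div, add_div] at this
  linarith

lemma lexLe_shift (hβ : 0 < β) (hv : IsRemainderSeq β c v) (hv0 : ∀ n, 0 ≤ v n)
    (hv1 : ∀ n, v n ≤ 1) {i : ℕ} (hi : v i < v 0) : lexLe (fun n => c (n + i)) c :=
  lexLe_of_not_lexLt fun h =>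
    hi.not_ge (by simpa using (hv.shift i).le_of_lexLt hβ hv (fun n => hv0 _) hv1 h)

end IsRemainderSeq

section BetaExpansion

variable {β x : ℝ}

lemma isRemainderSeq_iterate_Tb (hβ : 0 < β) (hx : 0 ≤ x) :
    IsRemainderSeq β (digit β x) (fun n => (Tb β)^[n] x) := fun n => by
  simp only [iterate_Tb_succ hβ.le hx]
  field_simp
  ring

lemma iterate_Tb_eq_zero_of_digit_eq_zero (hβ : 1 < β) (hx : 0 ≤ x) {m : ℕ}
    (htail : ∀ k, m < k → digit β x k = 0) : (Tb β)^[m + 1] x = 0 := by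
  have hgrow : ∀ j, (Tb β)^[m + 1 + j] x = β ^ j * (Tb β)^[m + 1] x := by
    intro j
    induction j with
    | zero => simp
    | succ j ih =>
      rw [← add_assoc, iterate_Tb_succ (by positivity) hx, ih, htail _ (by omega), pow_succ]
      push_cast
      ring
  by_contra hne
  have hpos := (iterate_Tb_nonneg hx (m + 1)).lt_of_ne' hne
  obtain ⟨j, hj⟩ := pow_unbounded_of_one_lt (1 / (Tb β)^[m + 1] x) hβ
  have := (hgrow j).symm.trans_lt (iterate_Tb_lt_one (n := m + 1 + j) (by omega))
  rw [div_lt_iff₀ hpos] at hj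
  linarith

lemma epsStar_eq_of_last_digit {m : ℕ} (hm : digit β 1 m ≠ 0)
    (htail : ∀ k, m < k → digit β 1 k = 0) :
    epsStar β = fun n =>
      if n % (m + 1) = m then digit β 1 m - 1 else digit β 1 (n % (m + 1)) := by
  have hfin : ∃ m, digit β 1 m ≠ 0 ∧ ∀ k, m < k → digit β 1 k = 0 := ⟨m, hm, htail⟩
  obtain ⟨hm', htail'⟩ := hfin.choose_spec
  have hchoose : hfin.choose = m :=
    le_antisymm (not_lt.1 fun h => hm' (htail _ h)) (not_lt.1 fun h => hm (htail' m h))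
  rw [epsStar, dif_pos hfin, hchoose]

lemma isRemainderSeq_epsStar_of_last_digit (hβ : 1 < β) {m : ℕ} (hm : digit β 1 m ≠ 0)
    (htail : ∀ k, m < k → digit β 1 k = 0) :
    IsRemainderSeq β (epsStar β) (fun n => (Tb β)^[n % (m + 1)] 1) := by
  have hβ0 : 0 < β := one_pos.trans hβ
  intro n
  rw [epsStar_eq_of_last_digit hm htail]
  dsimp only
  split_ifs with hn
  · have hsucc : (n + 1) % (m + 1) = 0 := Nat.succ_mod_succ_eq_zero_iff.2 hn
    have hlast := iterate_Tb_succ hβ0.le zero_le_one m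
    rw [iterate_Tb_eq_zero_of_digit_eq_zero hβ zero_le_one htail] at hlast
    rw [hn, hsucc, Nat.cast_pred (Nat.pos_of_ne_zero hm), iterate_zero_apply]
    field_simp
    linarith
  · have hsucc : (n + 1) % (m + 1) = n % (m + 1) + 1 := by
      have := Nat.mod_lt n (by omega : 0 < m + 1)
      rw [← Nat.mod_add_mod, Nat.mod_eq_of_lt (by omega)]
    rw [hsucc]
    exact isRemainderSeq_iterate_Tb hβ0 zero_le_one (n % (m + 1))

end BetaExpansion

theorem shift_epsStar_le (β : ℝ) (hβ : 1 < β) (i : ℕ) (hi : 1 ≤ i) :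
    lexLe (fun n => epsStar β (n + i)) (epsStar β) := by
  have hβ0 : 0 < β := one_pos.trans hβ
  have hT0 : ∀ n, 0 ≤ (Tb β)^[n] 1 := iterate_Tb_nonneg zero_le_one
  have hT1 : ∀ n, (Tb β)^[n] 1 ≤ 1 := iterate_Tb_le_one le_rfl
  by_cases hfin : ∃ m, digit β 1 m ≠ 0 ∧ ∀ k, m < k → digit β 1 k = 0
  · obtain ⟨m, hm, htail⟩ := hfin
    rcases Nat.eq_zero_or_pos (i % (m + 1)) with hper | hper
    · obtain ⟨q, rfl⟩ := Nat.dvd_of_mod_eq_zero hper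
      right
      simp only [epsStar_eq_of_last_digit hm htail, Nat.add_mul_mod_self_left]
    · exact (isRemainderSeq_epsStar_of_last_digit hβ hm htail).lexLe_shift hβ0
        (fun n => hT0 _) (fun n => hT1 _) (by simpa using iterate_Tb_lt_one hper.ne')
  · rw [epsStar, dif_neg hfin]
    exact (isRemainderSeq_iterate_Tb hβ0 zero_le_one).lexLe_shift hβ0 hT0 hT1
      (iterate_Tb_lt_one (by omega))
end

section
/- If ω = (ω_1,…,ω_n) is a self-admissible word with recurrence time τ(ω) = k < n, then the prefix (ω_1,…,ω_k) is non-recurrent, i.e. τ(ω_1,…,ω_k) = k. -/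
open Filter Topology

theorem prefix_nonrecurrent (n k : ℕ) (ω : Fin n → ℕ) (hsa : selfAdmissible ω)
    (hτ : tau ω = k) (hkn : k < n) :
    tau (fun i : Fin k => ω ⟨i.val, lt_trans i.isLt hkn⟩) = k := by
  classical
  set ω' : Fin k → ℕ := fun i : Fin k => ω ⟨i.val, lt_trans i.isLt hkn⟩ with hω'
  have hset : k ∈ ({m | 1 ≤ m ∧ m < n ∧ ∀ j, j < n - m → pad ω (m + j) = pad ω j} ∪ {n}) := by
    rw [← hτ]; exact Nat.sInf_mem ⟨n, Or.inr rfl⟩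
  have hkS : 1 ≤ k ∧ k < n ∧ ∀ j, j < n - k → pad ω (k + j) = pad ω j := by
    rcases hset with h | h
    · exact h
    · simp only [Set.mem_singleton_iff] at h; omega
  obtain ⟨hk1, -, hper⟩ := hkS
  have hmin : ∀ m, 1 ≤ m → m < n → (∀ j, j < n - m → pad ω (m + j) = pad ω j) → k ≤ m := by
    intro m h1 h2 h3
    rw [← hτ]
    exact Nat.sInf_le (Or.inl ⟨h1, h2, h3⟩)
  have hpad' : ∀ j, j < k → pad ω' j = pad ω j := by
    intro j h
    have h' : j < n := lt_trans h hkn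
    simp only [pad, h, h', dif_pos, hω']
  have hS' : ∀ m, ¬ (1 ≤ m ∧ m < k ∧ ∀ j, j < k - m → pad ω' (m + j) = pad ω' j) := by
    rintro m ⟨hm1, hmk, hmper'⟩
    have hmper : ∀ j, j < k - m → pad ω (m + j) = pad ω j := by
      intro j hj
      rw [← hpad' (m + j) (by omega), ← hpad' j (by omega)]
      exact hmper' j hj
    have hfull : ∀ j, j < n - m → pad ω (m + j) = pad ω j := by
      by_contra hcon
      push_neg at hcon
      obtain ⟨jx, hjx1, hjx2⟩ := hcon
      have hex : ∃ j, j < n - m ∧ pad ω (m + j) ≠ pad ω j := ⟨jx, hjx1, hjx2⟩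
      set j0 := Nat.find hex with hj0def
      obtain ⟨hj0lt, hj0ne⟩ : j0 < n - m ∧ pad ω (m + j0) ≠ pad ω j0 := Nat.find_spec hex
      have hmin0 : ∀ j, j < j0 → j < n - m → pad ω (m + j) = pad ω j := by
        intro j hj hj'
        by_contra hne
        exact Nat.find_min hex hj ⟨hj', hne⟩
      have hge : k - m ≤ j0 := by
        by_contra h
        exact hj0ne (hmper j0 (by omega))
      -- Step A: self-admissibility at shift m gives a strict inequality at j0
      have hA := hsa m hm1 (by omega)
      have htrm : ∀ j, j < n - m → trunc ω (n - m) j = pad ω j := by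
        intro j hj; simp only [trunc, if_pos hj]
      have hstrict : pad ω (m + j0) < pad ω j0 := by
        rcases hA with ⟨K, hK, hKlt⟩ | heq
        · have hKlt' : pad ω (K + m) < trunc ω (n - m) K := hKlt
          have hKnm : K < n - m := by
            by_contra h'
            have h0 : trunc ω (n - m) K = 0 := by
              simp only [trunc]; rw [if_neg (by omega)]
            rw [h0] at hKlt'; omega
          rw [htrm K hKnm, Nat.add_comm] at hKlt'
          rcases lt_trichotomy K j0 with h | h | h
          · have heqK := hmin0 K h hKnm
            omega
          · rw [h] at hKlt'
            exact hKlt'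
          · have h2 : pad ω (j0 + m) = trunc ω (n - m) j0 := hK j0 h
            rw [htrm j0 hj0lt, Nat.add_comm] at h2
            exact absurd h2 hj0ne
        · have h2 : pad ω (j0 + m) = trunc ω (n - m) j0 := congrFun heq j0
          rw [htrm j0 hj0lt, Nat.add_comm] at h2
          exact absurd h2 hj0ne
      -- Step B: translate via period k
      set j1 := j0 - (k - m) with hj1def
      have hj1k : j1 < n - k := by omega
      have h01 : j1 + (k - m) = j0 := by omega
      have hBeq : pad ω (m + j0) = pad ω j1 := by
        have h2 : m + j0 = k + j1 := by omega
        rw [h2]; exact hper j1 hj1k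
      have hB : pad ω j1 < pad ω (j1 + (k - m)) := by
        rw [h01, ← hBeq]; exact hstrict
      -- Step C: self-admissibility at shift k - m
      have hC := hsa (k - m) (by omega) (by omega)
      have htrd : ∀ j, j < n - (k - m) → trunc ω (n - (k - m)) j = pad ω j := by
        intro j hj; simp only [trunc, if_pos hj]
      obtain ⟨K2, hK2eq, hK2lt⟩ :
          ∃ K2, (∀ j, j < K2 → pad ω (j + (k - m)) = trunc ω (n - (k - m)) j) ∧
            pad ω (K2 + (k - m)) < trunc ω (n - (k - m)) K2 := by
        rcases hC with ⟨K2, h1, h2⟩ | heq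
        · exact ⟨K2, fun j hj => h1 j hj, h2⟩
        · exfalso
          have h2 : pad ω (j1 + (k - m)) = trunc ω (n - (k - m)) j1 := congrFun heq j1
          rw [htrd j1 (by omega)] at h2
          omega
      have hK2nm : K2 < n - (k - m) := by
        by_contra h'
        have h0 : trunc ω (n - (k - m)) K2 = 0 := by
          simp only [trunc]; rw [if_neg (by omega)]
        rw [h0] at hK2lt; omega
      rw [htrd K2 hK2nm] at hK2lt
      have hK2j1 : K2 < j1 := by
        rcases lt_trichotomy K2 j1 with h | h | h
        · exact h
        · exfalso; rw [h] at hK2lt; omega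
        · exfalso
          have := hK2eq j1 h
          rw [htrd j1 (by omega)] at this
          omega
      -- Step D: produce an earlier mismatch at shift m
      set j4 := K2 + (k - m) with hj4def
      have hD1 : pad ω (k + K2) = pad ω K2 := hper K2 (by omega)
      have h4a : m + j4 = k + K2 := by omega
      have hne4 : pad ω (m + j4) ≠ pad ω j4 := by
        rw [h4a, hD1]
        omega
      have h4b : j4 < n - m := by omega
      have h4c : j4 < j0 := by omega
      exact Nat.find_min hex h4c ⟨h4b, hne4⟩
    have := hmin m hm1 (by omega) hfull
    omega
  -- Now compute tau ω'
  show tau ω' = k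
  unfold tau
  apply le_antisymm
  · exact Nat.sInf_le (Or.inr rfl)
  · apply le_csInf ⟨k, Or.inr rfl⟩
    rintro b (hb | hb)
    · exact absurd hb (hS' b)
    · simp only [Set.mem_singleton_iff] at hb; omega
end

section
/- If ω = (ω_1,…,ω_n) is a self-admissible non-recurrent word, then its immediate successor in the set Λ_n of self-admissible words of length n, under the lexicographical order, is (ω_1,…,ω_{n-1},ω_n + 1). -/
open Filter Topology

lemma lexLe_iff_not_lexLt (a b : ℕ → ℕ) : lexLe a b ↔ ¬ lexLt b a := by
  constructor
  · rintro (⟨k, hk, hlt⟩ | rfl) ⟨m, hm, hlt'⟩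
    · rcases lt_trichotomy k m with h | rfl | h
      · have := hm k h; omega
      · omega
      · have := hk m h; omega
    · omega
  · intro h
    by_cases he : ∀ k, a k = b k
    · exact Or.inr (funext he)
    · push_neg at he
      have hk : a (Nat.find he) ≠ b (Nat.find he) := Nat.find_spec he
      have hmin : ∀ j, j < Nat.find he → a j = b j := fun j hj =>
        not_not.mp (Nat.find_min he hj)
      rcases lt_or_gt_of_ne hk with h' | h'
      · exact Or.inl ⟨Nat.find he, hmin, h'⟩
      · exact absurd ⟨Nat.find he, fun j hj => (hmin j hj).symm, h'⟩ h

theorem successor_of_nonrecurrent (n : ℕ) (hn : 0 < n) (ω : Fin n → ℕ)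
    (hsa : selfAdmissible ω) (hτ : tau ω = n) :
    letI ω' : Fin n → ℕ :=
      Function.update ω ⟨n - 1, by omega⟩ (ω ⟨n - 1, by omega⟩ + 1)
    selfAdmissible ω' ∧ wordLt ω ω' ∧
      ∀ u : Fin n → ℕ, selfAdmissible u → wordLt ω u → wordLe ω' u := by
  have hm : (n : ℕ) - 1 < n := by omega
  set ω' : Fin n → ℕ := Function.update ω ⟨n - 1, hm⟩ (ω ⟨n - 1, hm⟩ + 1) with hω'def
  have h1 : ∀ k, k ≠ n - 1 → pad ω' k = pad ω k := by
    intro k hk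
    unfold pad
    by_cases h : k < n
    · simp only [dif_pos h, hω'def]
      exact Function.update_of_ne (by simp [Fin.ext_iff]; omega) _ ω
    · simp [h]
  have h2 : pad ω' (n - 1) = pad ω (n - 1) + 1 := by
    unfold pad
    simp only [dif_pos hm, hω'def]
    simp [Function.update_self]
  have hpad0 : ∀ k, ¬ k < n → pad ω k = 0 := by intro k hk; unfold pad; simp [hk]
  have htau' : ∀ i, 1 ≤ i → i < n → ∃ j, j < n - i ∧ pad ω (i + j) ≠ pad ω j := by
    intro i hi1 hi2
    by_contra hcon
    push_neg at hcon
    have hmem : i ∈ ({k | 1 ≤ k ∧ k < n ∧ ∀ j, j < n - k → pad ω (k + j) = pad ω j}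
        ∪ {n} : Set ℕ) := Set.mem_union_left _ ⟨hi1, hi2, fun j hj => hcon j hj⟩
    have := Nat.sInf_le hmem
    rw [show sInf ({k | 1 ≤ k ∧ k < n ∧ ∀ j, j < n - k → pad ω (k + j) = pad ω j}
        ∪ {n} : Set ℕ) = tau ω from rfl, hτ] at this
    omega
  refine ⟨?_, ?_, ?_⟩
  · -- selfAdmissible ω'
    intro i hi1 hi2
    have htr : ∀ j, trunc ω' (n - i) j = trunc ω (n - i) j := by
      intro j
      unfold trunc
      by_cases h : j < n - i
      · simp only [if_pos h]; exact h1 j (by omega)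
      · simp [h]
    rw [lexLe_iff_not_lexLt]
    rintro ⟨k, hagree0, hlt0⟩
    have hagree : ∀ j, j < k → trunc ω' (n - i) j = pad ω' (j + i) := hagree0
    have hlt : trunc ω' (n - i) k < pad ω' (k + i) := hlt0
    clear hagree0 hlt0
    rcases lt_trichotomy (k + i) (n - 1) with hki | hki | hki
    · -- k + i < n - 1 : contradicts self-admissibility of ω
      have := (lexLe_iff_not_lexLt _ _).mp (hsa i hi1 hi2)
      apply this
      refine ⟨k, ?_, ?_⟩
      · intro j hj
        have := hagree j hj
        rw [htr j, h1 (j + i) (by omega)] at this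
        exact this
      · rw [htr k, h1 (k + i) (by omega)] at hlt
        exact hlt
    · -- k + i = n - 1
      have hk' : k < n - i := by omega
      have hagree' : ∀ j, j < k → pad ω (i + j) = pad ω j := by
        intro j hj
        have h := hagree j hj
        rw [htr j, h1 (j + i) (by omega)] at h
        have htj : trunc ω (n - i) j = pad ω j := by unfold trunc; rw [if_pos (by omega)]
        rw [htj] at h
        rw [Nat.add_comm i j]
        exact h.symm
      have hltk : trunc ω (n - i) k < pad ω (n - 1) + 1 := by
        rw [htr k, hki, h2] at hlt
        exact hlt
      have htk : trunc ω (n - i) k = pad ω k := by unfold trunc; rw [if_pos hk']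
      rw [htk] at hltk
      rcases lt_or_eq_of_le (Nat.lt_succ_iff.mp hltk) with hc | hc
      · -- strict: contradicts hsa
        have := (lexLe_iff_not_lexLt _ _).mp (hsa i hi1 hi2)
        apply this
        refine ⟨k, ?_, ?_⟩
        · intro j hj
          have htj : trunc ω (n - i) j = pad ω j := by unfold trunc; rw [if_pos (by omega)]
          show trunc ω (n - i) j = pad ω (j + i)
          rw [htj, Nat.add_comm j i]
          exact (hagree' j hj).symm
        · show trunc ω (n - i) k < pad ω (k + i)
          rw [htk, show k + i = n - 1 from hki]
          exact hc
      · -- equal: contradicts nonrecurrence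
        obtain ⟨j, hj1, hj2⟩ := htau' i hi1 hi2
        rcases lt_or_eq_of_le (show j ≤ k by omega) with h' | h'
        · exact hj2 (hagree' j h')
        · apply hj2
          rw [h', Nat.add_comm i k, hki, hc]
    · -- k + i > n - 1 : pad ω' (k+i) = 0, impossible
      have : pad ω' (k + i) = 0 := by
        rw [h1 (k + i) (by omega)]
        exact hpad0 _ (by omega)
      omega
  · -- wordLt ω ω'
    refine ⟨n - 1, ?_, ?_⟩
    · intro j hj
      exact (h1 j (by omega)).symm
    · rw [h2]; omega
  · -- minimality
    rintro u _ ⟨k, hagree, hlt⟩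
    have hkn : k < n := by
      by_contra hc
      have : pad u k = 0 := by unfold pad; simp [hc]
      omega
    rcases lt_or_eq_of_le (show k ≤ n - 1 by omega) with hk1 | hk1
    · left
      refine ⟨k, ?_, ?_⟩
      · intro j hj
        rw [h1 j (by omega)]
        exact hagree j hj
      · rw [h1 k (by omega)]
        exact hlt
    · -- k = n - 1
      subst hk1
      have hpadlast : pad ω (n - 1) + 1 ≤ pad u (n - 1) := by omega
      have hagree' : ∀ j, j < n - 1 → pad ω' j = pad u j := by
        intro j hj
        rw [h1 j (by omega)]
        exact hagree j (by omega)
      rcases lt_or_eq_of_le hpadlast with hc | hc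
      · left
        refine ⟨n - 1, hagree', ?_⟩
        rw [h2]; exact hc
      · right
        funext i
        have hiv : pad ω' i.val = pad u i.val := by
          rcases lt_or_eq_of_le (show i.val ≤ n - 1 by omega) with h' | h'
          · exact hagree' i.val h'
          · rw [h', h2, hc]
        unfold pad at hiv
        simpa [i.isLt] using hiv
end

section
/- If ω = (ω_1,…,ω_n) is a self-admissible word with recurrence time τ(ω) = k < n, then its immediate successor in Λ_n under the lexicographical order is (ω_1,…,ω_{k-1},ω_k + 1, 0^{n-k}). -/
open Filter Topology

/-- If `lexLe A B` and `A`, `B` agree strictly below `p`, then `A p ≤ B p`. -/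
lemma lexLe_nth {A B : ℕ → ℕ} (h : lexLe A B) {p : ℕ} (hp : ∀ j, j < p → A j = B j) :
    A p ≤ B p := by
  rcases h with ⟨m, hm, hlt⟩ | rfl
  · rcases lt_trichotomy m p with h' | rfl | h'
    · exact absurd (hp m h') (Nat.ne_of_lt hlt)
    · exact le_of_lt hlt
    · exact le_of_eq (hm p h')
  · exact le_rfl

/-- If `A` agrees with `B` below `m` and vanishes from `m` on, then `lexLe A B`. -/
lemma lexLe_of_agree_zero {A B : ℕ → ℕ} (m : ℕ) (h1 : ∀ j, j < m → A j = B j)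
    (h2 : ∀ j, m ≤ j → A j = 0) : lexLe A B := by
  classical
  by_cases hb : ∀ j, m ≤ j → B j = 0
  · right; funext j
    rcases lt_or_ge j m with h | h
    · exact h1 j h
    · rw [h2 j h, hb j h]
  · push_neg at hb
    obtain ⟨j₀, hj₀, hne⟩ := hb
    have hex : ∃ j, m ≤ j ∧ B j ≠ 0 := ⟨j₀, hj₀, hne⟩
    left
    refine ⟨Nat.find hex, ?_, ?_⟩
    · intro j hj
      rcases lt_or_ge j m with h | h
      · exact h1 j h
      · have hmin := Nat.find_min hex hj
        push_neg at hmin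
        rw [h2 j h, hmin h]
    · rw [h2 _ (Nat.find_spec hex).1]
      exact Nat.pos_of_ne_zero (Nat.find_spec hex).2

theorem successor_of_recurrent (n k : ℕ) (ω : Fin n → ℕ) (hsa : selfAdmissible ω)
    (hτ : tau ω = k) (hkn : k < n) :
    letI ω' : Fin n → ℕ := fun i =>
      if i.val + 1 < k then ω i else if i.val + 1 = k then ω i + 1 else 0
    selfAdmissible ω' ∧ wordLt ω ω' ∧
      ∀ u : Fin n → ℕ, selfAdmissible u → wordLt ω u → wordLe ω' u := by
  set W : Fin n → ℕ := fun i =>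
      if i.val + 1 < k then ω i else if i.val + 1 = k then ω i + 1 else 0 with hW
  have hpW : ∀ t, pad W t = if t + 1 < k then pad ω t else if t + 1 = k then pad ω t + 1 else 0 := by
    intro t
    by_cases ht : t < n
    · simp [pad, hW, ht]
    · have h1 : ¬ (t + 1 < k) := by omega
      have h2 : ¬ (t + 1 = k) := by omega
      simp [pad, ht, h1, h2]
  -- facts from tau ω = k
  have hmem := Nat.sInf_mem (s := {k | 1 ≤ k ∧ k < n ∧ ∀ j, j < n - k → pad ω (k + j) = pad ω j} ∪ {n})
    ⟨n, Or.inr rfl⟩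
  rw [show sInf ({k | 1 ≤ k ∧ k < n ∧ ∀ j, j < n - k → pad ω (k + j) = pad ω j} ∪ {n}) = k
    from hτ] at hmem
  have hk1 : 1 ≤ k := by
    rcases hmem with h | h
    · exact h.1
    · exact absurd h (by simpa using hkn.ne)
  have hper : ∀ j, j < n - k → pad ω (k + j) = pad ω j := by
    rcases hmem with h | h
    · exact h.2.2
    · exact absurd h (by simpa using hkn.ne)
  have hmin : ∀ i, 1 ≤ i → i < n → (∀ j, j < n - i → pad ω (i + j) = pad ω j) → k ≤ i := by
    intro i h1 h2 h3
    have h4 : tau ω ≤ i := Nat.sInf_le (Set.mem_union_left _ ⟨h1, h2, h3⟩)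
    rwa [hτ] at h4
  have hmulk : ∀ q j, q * k + j < n → pad ω (q * k + j) = pad ω j := by
    intro q
    induction q with
    | zero => intro j h; simp
    | succ q ih =>
      intro j h
      have e1 : (q + 1) * k + j = q * k + (k + j) := by ring
      rw [e1]
      rw [ih (k + j) (by omega)]
      have h6 : k + j < n := by nlinarith [Nat.zero_le (q * k)]
      exact hper j (by omega)
  -- key lemma: the first strict drop of σ^i ω happens before position k - i
  have hkey : ∀ i, 1 ≤ i → i < k → ∃ m, m + i < k ∧
      (∀ j, j < m → pad ω (j + i) = pad ω j) ∧ pad ω (m + i) < pad ω m := by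
    intro i h1 h2
    have hin : i < n := h2.trans hkn
    have hle := hsa i h1 hin
    rcases hle with hlt | he
    · obtain ⟨m, hm, hmlt⟩ := hlt
      simp only [trunc] at hmlt hm
      have hmni : m < n - i := by
        by_contra hc
        rw [if_neg hc] at hmlt
        omega
      rw [if_pos hmni] at hmlt
      have hm' : ∀ j, j < m → pad ω (j + i) = pad ω j := by
        intro j hj
        have := hm j hj
        rwa [if_pos (show j < n - i from by omega)] at this
      refine ⟨m, ?_, hm', hmlt⟩
      by_contra hc
      push_neg at hc
      have hd1 : 1 ≤ k - i := by omega
      have hdm : k - i ≤ m := by omega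
      have hss : ∀ s, s < m - (k - i) → pad ω (s + (k - i)) = pad ω s := by
        intro s hs
        have h5 := hm' ((k - i) + s) (by omega)
        rw [show (k - i) + s + i = k + s from by omega] at h5
        rw [hper s (by omega)] at h5
        rw [show s + (k - i) = (k - i) + s from by omega]
        exact h5.symm
      have hmd : pad ω (m - (k - i)) < pad ω m := by
        have h6 : m + i = k + (m - (k - i)) := by omega
        rw [h6, hper (m - (k - i)) (by omega)] at hmlt
        exact hmlt
      have hled := hsa (k - i) hd1 (by omega)
      have hfin := lexLe_nth hled (p := m - (k - i)) (by
        intro j hj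
        simp only [trunc]
        rw [if_pos (show j < n - (k - i) from by omega)]
        exact hss j hj)
      simp only [trunc] at hfin
      rw [if_pos (show m - (k - i) < n - (k - i) from by omega),
        show m - (k - i) + (k - i) = m from by omega] at hfin
      omega
    · exfalso
      have h3 : ∀ j, j < n - i → pad ω (i + j) = pad ω j := by
        intro j hj
        have := congrFun he j
        simp only [trunc] at this
        rw [if_pos hj] at this
        rwa [Nat.add_comm i j]
      exact absurd (hmin i h1 hin h3) (by omega)
  -- Part 1: W is self-admissible
  have hadm : selfAdmissible W := by
    intro i hi1 hi2
    rcases le_or_gt k i with hki | hik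
    · exact lexLe_of_agree_zero 0 (fun j hj => absurd hj (Nat.not_lt_zero j))
        (fun j _ => by rw [hpW, if_neg (by omega), if_neg (by omega)])
    · obtain ⟨m, hmk, hagree, hlt⟩ := hkey i hi1 hik
      have hbefore : ∀ j, j < m → pad W (j + i) = trunc W (n - i) j := by
        intro j hj
        simp only [trunc]
        rw [hpW, if_pos (show j + i + 1 < k from by omega),
          if_pos (show j < n - i from by omega), hpW,
          if_pos (show j + 1 < k from by omega)]
        exact hagree j hj
      have hTm : trunc W (n - i) m = pad ω m := by
        simp only [trunc]
        rw [if_pos (show m < n - i from by omega), hpW,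
          if_pos (show m + 1 < k from by omega)]
      rcases Nat.lt_or_ge (m + i + 1) k with hc | hc
      · left
        refine ⟨m, hbefore, ?_⟩
        show pad W (m + i) < trunc W (n - i) m
        rw [hpW, if_pos hc, hTm]
        exact hlt
      · have hceq : m + i + 1 = k := by omega
        have hle1 : pad ω (m + i) + 1 ≤ pad ω m := hlt
        rcases eq_or_lt_of_le hle1 with heq | hlt2
        · apply lexLe_of_agree_zero (m + 1)
          · intro j hj
            rcases Nat.lt_or_ge j m with h | h
            · exact hbefore j h
            · have hjm : j = m := by omega
              subst hjm
              show pad W (j + i) = trunc W (n - i) j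
              rw [hpW, if_neg (by omega), if_pos hceq, hTm]
              exact heq
          · intro j hj
            show pad W (j + i) = 0
            rw [hpW, if_neg (by omega), if_neg (by omega)]
        · left
          refine ⟨m, hbefore, ?_⟩
          show pad W (m + i) < trunc W (n - i) m
          rw [hpW, if_neg (by omega), if_pos hceq, hTm]
          exact hlt2
  -- Part 2: ω < W
  have hword : wordLt ω W := by
    refine ⟨k - 1, ?_, ?_⟩
    · intro j hj
      rw [hpW, if_pos (by omega)]
    · rw [hpW, if_neg (by omega), if_pos (by omega)]
      omega
  -- Part 3: minimality
  refine ⟨hadm, hword, ?_⟩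
  rintro u hu ⟨m, hag, hm⟩
  have hmn : m < n := by
    by_contra hc
    push_neg at hc
    simp only [pad, dif_neg (show ¬ m < n from by omega)] at hm
    omega
  rcases Nat.lt_or_ge (m + 1) k with h1 | h1
  · left
    refine ⟨m, ?_, ?_⟩
    · intro j hj
      rw [hpW, if_pos (by omega)]
      exact hag j hj
    · rw [hpW, if_pos h1]
      exact hm
  rcases Nat.eq_or_lt_of_le h1 with h2 | h2
  · -- m + 1 = k
    have hle1 : pad ω m + 1 ≤ pad u m := hm
    rcases eq_or_lt_of_le hle1 with heq | hlt2
    · have hle2 : lexLe (pad W) (pad u) := by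
        apply lexLe_of_agree_zero (m + 1)
        · intro j hj
          rcases Nat.lt_or_ge j m with h | h
          · rw [hpW, if_pos (by omega)]
            exact hag j h
          · have hjm : j = m := by omega
            subst hjm
            rw [hpW, if_neg (by omega), if_pos h2.symm]
            exact heq
        · intro j hj
          rw [hpW, if_neg (by omega), if_neg (by omega)]
      rcases hle2 with h | h
      · exact Or.inl h
      · right
        funext i
        have h3 := congrFun h i.val
        rw [pad, dif_pos i.isLt, pad, dif_pos i.isLt] at h3
        simpa using h3
    · left
      refine ⟨m, ?_, ?_⟩
      · intro j hj
        rw [hpW, if_pos (by omega)]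
        exact hag j hj
      · rw [hpW, if_neg (by omega), if_pos h2.symm]
        exact hlt2
  · -- m ≥ k : impossible
    exfalso
    have hdm := Nat.div_add_mod m k
    set q := m / k with hq
    set r := m % k with hr
    set i₀ := k * q with hi0
    have hrk : r < k := Nat.mod_lt _ (by omega)
    have hqk : q * k = i₀ := by rw [hi0, Nat.mul_comm]
    have hi01 : 1 ≤ i₀ := by omega
    have hi0n : i₀ < n := by omega
    have hu0 := hu i₀ hi01 hi0n
    have hagree0 : ∀ j, j < r → pad u (j + i₀) = trunc u (n - i₀) j := by
      intro j hj
      have hji : j + i₀ < m := by omega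
      have e2 : pad ω (j + i₀) = pad ω j := by
        have := hmulk q j (by omega)
        rwa [hqk, Nat.add_comm i₀ j] at this
      simp only [trunc]
      rw [if_pos (show j < n - i₀ from by omega), ← hag _ hji, e2]
      exact hag j (by omega)
    have hfin := lexLe_nth hu0 (p := r) hagree0
    simp only [trunc] at hfin
    rw [show r + i₀ = m from by omega,
      if_pos (show r < n - i₀ from by omega)] at hfin
    have e6 : pad u r = pad ω r := (hag r (by omega)).symm
    have e7 : pad ω m = pad ω r := by
      have := hmulk q r (by omega)
      rwa [hqk, show i₀ + r = m from by omega] at this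
    omega
end

section
/- Suppose (ω_1,…,ω_{n-1},ω_n) and (ω_1,…,ω_{n-1},ω'_n) are both self-admissible words with 0 ≤ ω_n < ω'_n. Then (ω_1,…,ω_n) is non-recurrent, i.e. τ(ω_1,…,ω_n) = n. -/
open Filter Topology

theorem nonrecurrent_of_two_extensions (n : ℕ) (hn : 0 < n) (ω ω' : Fin n → ℕ)
    (hagree : ∀ i : Fin n, i.val + 1 < n → ω i = ω' i)
    (hsa : selfAdmissible ω) (hsa' : selfAdmissible ω')
    (hlt : ω ⟨n - 1, by omega⟩ < ω' ⟨n - 1, by omega⟩) :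
    tau ω = n := by
  have pe : ∀ (w : Fin n → ℕ) (j : ℕ) (h : j < n), pad w j = w ⟨j, h⟩ :=
    fun w j h => dif_pos h
  have te : ∀ (w : Fin n → ℕ) (mm j : ℕ), j < mm → trunc w mm j = pad w j :=
    fun w mm j h => if_pos h
  have hag : ∀ j, j + 1 < n → pad ω j = pad ω' j := by
    intro j hj
    rw [pe ω j (by omega), pe ω' j (by omega)]
    exact hagree ⟨j, by omega⟩ hj
  have hlt' : pad ω (n - 1) < pad ω' (n - 1) := by
    rw [pe ω (n - 1) (by omega), pe ω' (n - 1) (by omega)]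
    exact hlt
  have hset : {k | 1 ≤ k ∧ k < n ∧ ∀ j, j < n - k → pad ω (k + j) = pad ω j} = (∅ : Set ℕ) := by
    ext k
    simp only [Set.mem_setOf_eq, Set.mem_empty_iff_false, iff_false]
    rintro ⟨hk1, hk2, hrec⟩
    -- value at position n - 1 - k of the shifted word vs the truncation
    have hpa : pad ω' (n - 1 - k + k) = pad ω' (n - 1) :=
      congrArg (pad ω') (by omega)
    have hrm : pad ω (n - 1) = pad ω (n - 1 - k) := by
      have h1 := hrec (n - 1 - k) (by omega)
      have h2 : pad ω (k + (n - 1 - k)) = pad ω (n - 1) := congrArg (pad ω) (by omega)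
      rw [← h2, h1]
    have hpb : trunc ω' (n - k) (n - 1 - k) = pad ω (n - 1) := by
      rw [te ω' (n - k) (n - 1 - k) (by omega), ← hag (n - 1 - k) (by omega), ← hrm]
    -- agreement before position n - 1 - k
    have hE : ∀ j, j < n - 1 - k → pad ω' (j + k) = trunc ω' (n - k) j := by
      intro j hj
      rw [te ω' (n - k) j (by omega), ← hag (j + k) (by omega), ← hag j (by omega)]
      have h2 : pad ω (j + k) = pad ω (k + j) := congrArg (pad ω) (by omega)
      rw [h2]
      exact hrec j (by omega)
    rcases hsa' k hk1 hk2 with ⟨k0, hag0, hk0⟩ | heq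
    · rcases lt_trichotomy k0 (n - 1 - k) with h | h | h
      · simp only [hE k0 h] at hk0; exact lt_irrefl _ hk0
      · subst h
        simp only [hpa, hpb] at hk0
        omega
      · have h2 := hag0 (n - 1 - k) h
        simp only [hpa, hpb] at h2
        omega
    · have h2 := congrFun heq (n - 1 - k)
      simp only [hpa, hpb] at h2
      omega
  unfold tau
  rw [hset, Set.empty_union, csInf_singleton]
end

section
/- Let ω, ω' be self-admissible words of the same length n with ω <_lex ω'. Let β(ω), β(ω') ≥ 1 be the unique positive solutions of 1 = Σ_{i=1}^n ω_i x^{-i} and 1 = Σ_{i=1}^n ω'_i x^{-i} respectively. Then β(ω) < β(ω'). -/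
open Filter Topology

noncomputable def pSum {n : ℕ} (ω : Fin n → ℕ) (x : ℝ) (m : ℕ) : ℝ :=
  ∑ j ∈ Finset.range n, (pad ω (j + m) : ℝ) / x ^ (j + 1)

lemma pad_zero_of_ge {n : ℕ} (ω : Fin n → ℕ) {k : ℕ} (h : n ≤ k) : pad ω k = 0 := by
  simp [pad, Nat.not_lt.mpr h]

lemma pSum_eq_zero {n : ℕ} (ω : Fin n → ℕ) (x : ℝ) {m : ℕ} (hm : n ≤ m) :
    pSum ω x m = 0 := by
  apply Finset.sum_eq_zero
  intro j _
  rw [pad_zero_of_ge ω (by omega)]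
  simp

lemma pSum_zero_eq {n : ℕ} (ω : Fin n → ℕ) (x : ℝ) :
    pSum ω x 0 = ∑ i : Fin n, (ω i : ℝ) / x ^ (i.val + 1) := by
  rw [pSum]
  simp only [Nat.add_zero]
  rw [← Fin.sum_univ_eq_sum_range (fun j => (pad ω j : ℝ) / x ^ (j + 1)) n]
  apply Finset.sum_congr rfl
  intro i _
  simp [pad, i.isLt]

lemma prefix_le {n : ℕ} (ω : Fin n → ℕ) {x : ℝ} (hx : 1 ≤ x) {l : ℕ} (hln : l ≤ n) :
    ∑ j ∈ Finset.range l, (pad ω j : ℝ) / x ^ (j + 1) ≤ pSum ω x 0 := by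
  have hx0 : (0:ℝ) < x := lt_of_lt_of_le zero_lt_one hx
  rw [pSum]
  simp only [Nat.add_zero]
  apply Finset.sum_le_sum_of_subset_of_nonneg (Finset.range_subset_range.mpr hln)
  intro i _ _
  exact div_nonneg (Nat.cast_nonneg _) (pow_nonneg hx0.le _)

lemma split_pSum {n : ℕ} (ω : Fin n → ℕ) (x : ℝ) (m : ℕ) {l : ℕ} (hln : l < n) :
    pSum ω x m = (∑ j ∈ Finset.range l, (pad ω (j + m) : ℝ) / x ^ (j + 1))
      + (pad ω (l + m) : ℝ) / x ^ (l + 1)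
      + ∑ j ∈ Finset.Ico (l + 1) n, (pad ω (j + m) : ℝ) / x ^ (j + 1) := by
  rw [pSum, Finset.range_eq_Ico,
    ← Finset.sum_Ico_consecutive _ (Nat.zero_le (l+1)) (by omega : l + 1 ≤ n),
    ← Finset.range_eq_Ico, Finset.sum_range_succ]

lemma tail_le {n : ℕ} (ω : Fin n → ℕ) {x : ℝ} (hx : 1 ≤ x) (m l : ℕ) :
    ∑ j ∈ Finset.Ico (l + 1) n, (pad ω (j + m) : ℝ) / x ^ (j + 1)
      ≤ pSum ω x (m + l + 1) / x ^ (l + 1) := by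
  have hx0 : (0:ℝ) < x := lt_of_lt_of_le zero_lt_one hx
  rw [Finset.sum_Ico_eq_sum_range, pSum, Finset.sum_div]
  have hcong : ∀ i ∈ Finset.range (n - (l + 1)),
      (pad ω ((l + 1 + i) + m) : ℝ) / x ^ ((l + 1 + i) + 1)
        = (pad ω (i + (m + l + 1)) : ℝ) / x ^ (i + 1) / x ^ (l + 1) := by
    intro i _
    have h1 : (l + 1 + i) + m = i + (m + l + 1) := by omega
    have h2 : x ^ ((l + 1 + i) + 1) = x ^ (i + 1) * x ^ (l + 1) := by
      rw [← pow_add]; congr 1; omega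
    rw [h1, h2, div_div]
  rw [Finset.sum_congr rfl hcong]
  apply Finset.sum_le_sum_of_subset_of_nonneg (Finset.range_subset_range.mpr (by omega))
  intro i _ _
  exact div_nonneg (div_nonneg (Nat.cast_nonneg _) (pow_nonneg hx0.le _)) (pow_nonneg hx0.le _)

lemma pSum_le_one {n : ℕ} {ω : Fin n → ℕ} {x : ℝ} (hx : 1 ≤ x)
    (hsa : selfAdmissible ω) (h0 : pSum ω x 0 = 1) :
    ∀ t m, n - m ≤ t → pSum ω x m ≤ 1 := by
  have hx0 : (0:ℝ) < x := lt_of_lt_of_le zero_lt_one hx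
  intro t
  induction t with
  | zero =>
    intro m hm
    rw [pSum_eq_zero ω x (by omega)]
    exact zero_le_one
  | succ t ih =>
    intro m hm
    rcases le_or_gt n m with hnm | hmn
    · rw [pSum_eq_zero ω x hnm]; exact zero_le_one
    rcases Nat.eq_zero_or_pos m with rfl | hm1
    · exact le_of_eq h0
    rcases hsa m hm1 hmn with hl | heq
    · -- strict lex case
      obtain ⟨l, hagree, hlval⟩ := hl
      have hltr : l < n - m := by
        by_contra h
        push_neg at h
        simp [trunc, Nat.not_lt.mpr h] at hlval
      have hln : l < n := by omega
      have h2 : (pad ω (l + m) : ℝ) ≤ (pad ω l : ℝ) - 1 := by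
        have hh : pad ω (l + m) + 1 ≤ pad ω l := by
          have := hlval
          simp only [trunc, if_pos hltr] at this
          omega
        have := (Nat.cast_le (α := ℝ)).mpr hh
        push_cast at this
        linarith
      have hag : ∀ j ∈ Finset.range l,
          (pad ω (j + m) : ℝ) / x ^ (j + 1) = (pad ω j : ℝ) / x ^ (j + 1) := by
        intro j hj
        have hjl : j < l := Finset.mem_range.mp hj
        have := hagree j hjl
        simp only [trunc, if_pos (show j < n - m by omega)] at this
        rw [this]
      have htail : ∑ j ∈ Finset.Ico (l + 1) n, (pad ω (j + m) : ℝ) / x ^ (j + 1)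
          ≤ 1 / x ^ (l + 1) :=
        le_trans (tail_le ω hx m l)
          ((div_le_div_iff_of_pos_right (pow_pos hx0 _)).mpr (ih (m + l + 1) (by omega)))
      calc pSum ω x m
          = (∑ j ∈ Finset.range l, (pad ω (j + m) : ℝ) / x ^ (j + 1))
              + (pad ω (l + m) : ℝ) / x ^ (l + 1)
              + ∑ j ∈ Finset.Ico (l + 1) n, (pad ω (j + m) : ℝ) / x ^ (j + 1) :=
            split_pSum ω x m hln
        _ ≤ (∑ j ∈ Finset.range l, (pad ω j : ℝ) / x ^ (j + 1))
              + ((pad ω l : ℝ) - 1) / x ^ (l + 1) + 1 / x ^ (l + 1) := by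
            rw [Finset.sum_congr rfl hag]
            have hp := pow_pos hx0 (l + 1)
            gcongr
        _ = ∑ j ∈ Finset.range (l + 1), (pad ω j : ℝ) / x ^ (j + 1) := by
            rw [Finset.sum_range_succ]; ring
        _ ≤ pSum ω x 0 := prefix_le ω hx (by omega)
        _ = 1 := h0
    · -- equality case
      have heqf : ∀ j, pad ω (j + m) = trunc ω (n - m) j := fun j => congrFun heq j
      have : pSum ω x m ≤ pSum ω x 0 := by
        rw [pSum, pSum]
        apply Finset.sum_le_sum
        intro j _
        have htle : trunc ω (n - m) j ≤ pad ω (j + 0) := by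
          simp only [Nat.add_zero, trunc]
          split
          · exact le_refl _
          · exact Nat.zero_le _
        rw [heqf j]
        exact (div_le_div_iff_of_pos_right (pow_pos hx0 _)).mpr (by exact_mod_cast htle)
      linarith [h0 ▸ this]

lemma pSum_lt_one {n : ℕ} {ω : Fin n → ℕ} {x : ℝ} (hx : 1 ≤ x)
    (hsa : selfAdmissible ω) (h0 : pSum ω x 0 = 1) {m : ℕ} (hm1 : 1 ≤ m) :
    pSum ω x m < 1 := by
  have hx0 : (0:ℝ) < x := lt_of_lt_of_le zero_lt_one hx
  have hA : ∀ m', pSum ω x m' ≤ 1 := fun m' => pSum_le_one hx hsa h0 n m' (by omega)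
  rcases le_or_gt n m with hnm | hmn
  · rw [pSum_eq_zero ω x hnm]; exact zero_lt_one
  rcases hsa m hm1 hmn with hl | heq
  · -- strict lex case
    obtain ⟨l, hagree, hlval⟩ := hl
    have hltr : l < n - m := by
      by_contra h
      push_neg at h
      simp [trunc, Nat.not_lt.mpr h] at hlval
    have hln : l < n := by omega
    have hpadlt : pad ω (l + m) < pad ω l := by
      have := hlval
      simp only [trunc, if_pos hltr] at this
      exact this
    have hag : ∀ j ∈ Finset.range l,
        (pad ω (j + m) : ℝ) / x ^ (j + 1) = (pad ω j : ℝ) / x ^ (j + 1) := by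
      intro j hj
      have hjl : j < l := Finset.mem_range.mp hj
      have := hagree j hjl
      simp only [trunc, if_pos (show j < n - m by omega)] at this
      rw [this]
    by_cases hz : ∀ j, l < j → pad ω j = 0
    · -- all later entries vanish: tail is zero, strict at position l
      have htail0 : ∑ j ∈ Finset.Ico (l + 1) n, (pad ω (j + m) : ℝ) / x ^ (j + 1) = 0 := by
        apply Finset.sum_eq_zero
        intro j hj
        have : l + 1 ≤ j := (Finset.mem_Ico.mp hj).1
        rw [hz (j + m) (by omega)]
        simp
      calc pSum ω x m
          = (∑ j ∈ Finset.range l, (pad ω j : ℝ) / x ^ (j + 1))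
              + (pad ω (l + m) : ℝ) / x ^ (l + 1) + 0 := by
            rw [split_pSum ω x m hln, Finset.sum_congr rfl hag, htail0]
        _ < (∑ j ∈ Finset.range l, (pad ω j : ℝ) / x ^ (j + 1))
              + (pad ω l : ℝ) / x ^ (l + 1) := by
            have : (pad ω (l + m) : ℝ) < (pad ω l : ℝ) := by exact_mod_cast hpadlt
            have hp := pow_pos hx0 (l + 1)
            have := (div_lt_div_iff_of_pos_right hp).mpr this
            linarith
        _ = ∑ j ∈ Finset.range (l + 1), (pad ω j : ℝ) / x ^ (j + 1) := by
            rw [Finset.sum_range_succ]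
        _ ≤ pSum ω x 0 := prefix_le ω hx (by omega)
        _ = 1 := h0
    · -- some later entry is positive: prefix sum is strictly below 1
      push_neg at hz
      obtain ⟨j0, hj0l, hj0ne⟩ := hz
      have hj0n : j0 < n := by
        by_contra h
        exact hj0ne (pad_zero_of_ge ω (by omega))
      have h2 : (pad ω (l + m) : ℝ) ≤ (pad ω l : ℝ) - 1 := by
        have hh : pad ω (l + m) + 1 ≤ pad ω l := by omega
        have := (Nat.cast_le (α := ℝ)).mpr hh
        push_cast at this
        linarith
      have htail : ∑ j ∈ Finset.Ico (l + 1) n, (pad ω (j + m) : ℝ) / x ^ (j + 1)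
          ≤ 1 / x ^ (l + 1) :=
        le_trans (tail_le ω hx m l)
          ((div_le_div_iff_of_pos_right (pow_pos hx0 _)).mpr (hA (m + l + 1)))
      have hstep : pSum ω x m ≤ ∑ j ∈ Finset.range (l + 1), (pad ω j : ℝ) / x ^ (j + 1) := by
        calc pSum ω x m
            = (∑ j ∈ Finset.range l, (pad ω (j + m) : ℝ) / x ^ (j + 1))
                + (pad ω (l + m) : ℝ) / x ^ (l + 1)
                + ∑ j ∈ Finset.Ico (l + 1) n, (pad ω (j + m) : ℝ) / x ^ (j + 1) :=
              split_pSum ω x m hln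
          _ ≤ (∑ j ∈ Finset.range l, (pad ω j : ℝ) / x ^ (j + 1))
                + ((pad ω l : ℝ) - 1) / x ^ (l + 1) + 1 / x ^ (l + 1) := by
              rw [Finset.sum_congr rfl hag]
              have hp := pow_pos hx0 (l + 1)
              gcongr
          _ = ∑ j ∈ Finset.range (l + 1), (pad ω j : ℝ) / x ^ (j + 1) := by
              rw [Finset.sum_range_succ]; ring
      have hstrict : ∑ j ∈ Finset.range (l + 1), (pad ω j : ℝ) / x ^ (j + 1)
          < pSum ω x 0 := by
        rw [pSum]
        simp only [Nat.add_zero]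
        apply Finset.sum_lt_sum_of_subset (Finset.range_subset_range.mpr (by omega : l + 1 ≤ n))
          (Finset.mem_range.mpr hj0n) (by simp; omega)
        · apply div_pos
          · exact_mod_cast Nat.pos_of_ne_zero hj0ne
          · exact pow_pos hx0 _
        · intro i _ _
          exact div_nonneg (Nat.cast_nonneg _) (pow_nonneg hx0.le _)
      calc pSum ω x m ≤ _ := hstep
        _ < pSum ω x 0 := hstrict
        _ = 1 := h0
  · -- equality case
    have heqf : ∀ j, pad ω (j + m) = trunc ω (n - m) j := fun j => congrFun heq j
    by_cases hz : ∀ j, n - m ≤ j → pad ω j = 0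
    · -- impossible: iterating shows ω ≡ 0, contradicting pSum = 1
      exfalso
      have hiter : ∀ i j, n ≤ j + i * m → pad ω j = 0 := by
        intro i
        induction i with
        | zero => intro j hj; exact pad_zero_of_ge ω (by omega)
        | succ i ihi =>
          intro j hj
          rcases le_or_gt (n - m) j with h | h
          · exact hz j h
          · have h1 : pad ω (j + m) = pad ω j := by
              rw [heqf j]
              simp [trunc, h]
            have harith : j + (i + 1) * m = (j + m) + i * m := by ring
            rw [harith] at hj
            rw [← h1]
            exact ihi (j + m) hj
      have hall : ∀ j, pad ω j = 0 := by
        intro j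
        apply hiter n j
        have : n ≤ n * m := le_trans (by omega) (Nat.mul_le_mul_left n hm1)
        omega
      rw [pSum] at h0
      have hzero : ∑ j ∈ Finset.range n, (pad ω (j + 0) : ℝ) / x ^ (j + 1) = 0 := by
        apply Finset.sum_eq_zero
        intro j _
        rw [hall (j + 0)]
        simp
      rw [hzero] at h0
      norm_num at h0
    · push_neg at hz
      obtain ⟨j0, hj0ge, hj0ne⟩ := hz
      have hj0n : j0 < n := by
        by_contra h
        exact hj0ne (pad_zero_of_ge ω (by omega))
      rw [← h0, pSum, pSum]
      apply Finset.sum_lt_sum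
      · intro j _
        rw [heqf j]
        have htle : trunc ω (n - m) j ≤ pad ω (j + 0) := by
          simp only [Nat.add_zero, trunc]
          split
          · exact le_refl _
          · exact Nat.zero_le _
        exact (div_le_div_iff_of_pos_right (pow_pos hx0 _)).mpr (by exact_mod_cast htle)
      · refine ⟨j0, Finset.mem_range.mpr hj0n, ?_⟩
        rw [heqf j0]
        simp only [trunc, if_neg (Nat.not_lt.mpr hj0ge), Nat.add_zero, Nat.cast_zero,
          zero_div]
        apply div_pos
        · exact_mod_cast Nat.pos_of_ne_zero hj0ne
        · exact pow_pos hx0 _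

theorem root_strict_mono (n : ℕ) (ω ω' : Fin n → ℕ)
    (hsa : selfAdmissible ω) (hsa' : selfAdmissible ω') (hlt : wordLt ω ω')
    (x y : ℝ) (hx : 1 ≤ x) (hy : 1 ≤ y)
    (hxe : 1 = ∑ i : Fin n, (ω i : ℝ) / x ^ (i.val + 1))
    (hye : 1 = ∑ i : Fin n, (ω' i : ℝ) / y ^ (i.val + 1)) :
    x < y := by
  by_contra hxy
  push_neg at hxy
  have hx0 : (0:ℝ) < x := lt_of_lt_of_le zero_lt_one hx
  have hy0 : (0:ℝ) < y := lt_of_lt_of_le zero_lt_one hy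
  have h0 : pSum ω x 0 = 1 := by rw [pSum_zero_eq]; exact hxe.symm
  have h0' : pSum ω' y 0 = 1 := by rw [pSum_zero_eq]; exact hye.symm
  rcases Nat.eq_zero_or_pos n with rfl | hn
  · simp at hxe
  obtain ⟨k, hk1, hk2⟩ := hlt
  have hkn : k < n := by
    by_contra h
    push_neg at h
    rw [pad_zero_of_ge ω' h] at hk2
    omega
  -- tail of ω at x strictly below 1/x^(k+1)
  have hB : pSum ω x (0 + k + 1) < 1 := by
    have : (0 + k + 1) = k + 1 := by omega
    rw [this]
    exact pSum_lt_one hx hsa h0 (by omega)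
  have htail : ∑ j ∈ Finset.Ico (k + 1) n, (pad ω (j + 0) : ℝ) / x ^ (j + 1)
      < 1 / x ^ (k + 1) :=
    lt_of_le_of_lt (tail_le ω hx 0 k)
      ((div_lt_div_iff_of_pos_right (pow_pos hx0 _)).mpr hB)
  have hcast : (pad ω k : ℝ) + 1 ≤ (pad ω' k : ℝ) := by
    have := (Nat.cast_le (α := ℝ)).mpr (Nat.succ_le_of_lt hk2)
    push_cast at this
    linarith
  have hag : ∀ j ∈ Finset.range k,
      (pad ω (j + 0) : ℝ) / x ^ (j + 1) = (pad ω' j : ℝ) / x ^ (j + 1) := by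
    intro j hj
    rw [Nat.add_zero, hk1 j (Finset.mem_range.mp hj)]
  have key : (1:ℝ) < 1 := by
    calc (1:ℝ) = pSum ω x 0 := h0.symm
      _ = (∑ j ∈ Finset.range k, (pad ω (j + 0) : ℝ) / x ^ (j + 1))
            + (pad ω (k + 0) : ℝ) / x ^ (k + 1)
            + ∑ j ∈ Finset.Ico (k + 1) n, (pad ω (j + 0) : ℝ) / x ^ (j + 1) :=
          split_pSum ω x 0 hkn
      _ < (∑ j ∈ Finset.range k, (pad ω' j : ℝ) / x ^ (j + 1))
            + (pad ω k : ℝ) / x ^ (k + 1) + 1 / x ^ (k + 1) := by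
          rw [Finset.sum_congr rfl hag, Nat.add_zero]
          linarith
      _ = (∑ j ∈ Finset.range k, (pad ω' j : ℝ) / x ^ (j + 1))
            + ((pad ω k : ℝ) + 1) / x ^ (k + 1) := by ring
      _ ≤ (∑ j ∈ Finset.range k, (pad ω' j : ℝ) / x ^ (j + 1))
            + (pad ω' k : ℝ) / x ^ (k + 1) := by
          have hp := pow_pos hx0 (k + 1)
          gcongr
      _ = ∑ j ∈ Finset.range (k + 1), (pad ω' j : ℝ) / x ^ (j + 1) := by
          rw [Finset.sum_range_succ]
      _ ≤ pSum ω' x 0 := prefix_le ω' hx (by omega)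
      _ ≤ pSum ω' y 0 := by
          rw [pSum, pSum]
          apply Finset.sum_le_sum
          intro j _
          apply div_le_div_of_nonneg_left (Nat.cast_nonneg _) (pow_pos hy0 _)
          exact pow_le_pow_left₀ hy0.le hxy _
      _ = 1 := h0'
  exact lt_irrefl 1 key
end

section
/- For a self-admissible word ω of length n with recurrence time τ(ω) = k, the right endpoint β̄(ω) of the parameter cylinder I_n^P(ω) satisfies: the β̄(ω)-expansion of 1 equals (ω_1,…,ω_{k-1},ω_k + 1, 0^∞). -/
open Filter Topology

namespace BetaAux

/-- The polynomial `R_j(β) = β^j - ∑_{i<j} ω_i β^{j-1-i}`. -/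
noncomputable def Rp {n : ℕ} (ω : Fin n → ℕ) (j : ℕ) (β : ℝ) : ℝ :=
  β ^ j - ∑ i ∈ Finset.range j, (pad ω i : ℝ) * β ^ (j - 1 - i)

variable {n : ℕ} {ω : Fin n → ℕ}

lemma Rp_zero (β : ℝ) : Rp ω 0 β = 1 := by simp [Rp]

lemma Rp_succ (j : ℕ) (β : ℝ) : Rp ω (j + 1) β = β * Rp ω j β - pad ω j := by
  unfold Rp
  rw [Finset.sum_range_succ, mul_sub, Finset.mul_sum]
  have h1 : ∀ i ∈ Finset.range j, β * ((pad ω i : ℝ) * β ^ (j - 1 - i))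
      = (pad ω i : ℝ) * β ^ (j + 1 - 1 - i) := by
    intro i hi
    have hi' : i < j := Finset.mem_range.mp hi
    have : j - 1 - i + 1 = j + 1 - 1 - i := by omega
    rw [mul_left_comm, ← pow_succ', this]
  rw [Finset.sum_congr rfl h1]
  have h2 : j + 1 - 1 - j = 0 := by omega
  rw [h2]
  ring

lemma Tb_fract (β x : ℝ) : Tb β x = Int.fract (β * x) := rfl

lemma iter_nonneg (β : ℝ) (j : ℕ) : 0 ≤ (Tb β)^[j] 1 := by
  cases j with
  | zero => norm_num
  | succ j =>
    rw [Function.iterate_succ_apply']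
    exact Int.fract_nonneg _

lemma iter_lt_one (β : ℝ) {j : ℕ} (hj : 1 ≤ j) : (Tb β)^[j] 1 < 1 := by
  obtain ⟨j, rfl⟩ := Nat.exists_eq_add_of_le hj
  rw [add_comm, Function.iterate_succ_apply']
  exact Int.fract_lt_one _

lemma floor_nat_add {m : ℕ} {x : ℝ} (h0 : 0 ≤ x) (h1 : x < 1) : ⌊(m:ℝ) + x⌋ = m := by
  rw [Int.floor_eq_iff]
  push_cast; constructor <;> linarith

/-- For `β` in the cylinder, the iterates of `1` are given by `Rp`. -/
lemma cyl_iter {β : ℝ} (hβ : β ∈ cylP n ω) : ∀ j ≤ n, (Tb β)^[j] 1 = Rp ω j β := by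
  intro j hj
  induction j with
  | zero => simp [Rp_zero]
  | succ j ih =>
    have hjn : j < n := hj
    have hT := ih (Nat.le_of_succ_le hj)
    have hd : digit β 1 j = ω ⟨j, hjn⟩ := hβ.2 ⟨j, hjn⟩
    have hnn : (0:ℝ) ≤ β * (Tb β)^[j] 1 :=
      mul_nonneg (by linarith [hβ.1]) (iter_nonneg β j)
    have hfl : ⌊β * (Tb β)^[j] 1⌋ = (pad ω j : ℤ) := by
      have := Int.toNat_of_nonneg (Int.floor_nonneg.mpr hnn)
      rw [show (⌊β * (Tb β)^[j] 1⌋).toNat = pad ω j from by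
        rw [show pad ω j = ω ⟨j, hjn⟩ from dif_pos hjn]; exact hd] at this
      exact_mod_cast this.symm
    rw [Function.iterate_succ_apply', Tb, hfl, hT, Rp_succ]
    push_cast
    ring

lemma cyl_Rp_bounds {β : ℝ} (hβ : β ∈ cylP n ω) :
    ∀ j, 1 ≤ j → j ≤ n → 0 ≤ Rp ω j β ∧ Rp ω j β < 1 := by
  intro j h1 h2
  rw [← cyl_iter hβ j h2]
  exact ⟨iter_nonneg β j, iter_lt_one β h1⟩

lemma Rp_continuous (j : ℕ) : Continuous (Rp ω j) := by
  unfold Rp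
  exact (continuous_pow j).sub
    (continuous_finset_sum _ fun i _ => continuous_const.mul (continuous_pow _))

/-- Conversely, membership in the cylinder from bounds on `Rp`. -/
lemma mem_cyl {β : ℝ} (hβ : 1 < β)
    (hR : ∀ j, 1 ≤ j → j ≤ n → 0 ≤ Rp ω j β ∧ Rp ω j β < 1) : β ∈ cylP n ω := by
  have hiter : ∀ j ≤ n, (Tb β)^[j] 1 = Rp ω j β := by
    intro j hj
    induction j with
    | zero => simp [Rp_zero]
    | succ j ih =>
      have hT := ih (Nat.le_of_succ_le hj)
      have hkey : β * Rp ω j β = (pad ω j : ℝ) + Rp ω (j+1) β := by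
        rw [Rp_succ]; ring
      have hb := hR (j+1) (Nat.le_add_left 1 j) hj
      rw [Function.iterate_succ_apply', Tb, hT, hkey, floor_nat_add hb.1 hb.2]
      push_cast
      ring
  refine ⟨hβ, fun i => ?_⟩
  have hin : (i : ℕ) < n := i.2
  have hkey : β * Rp ω i β = (pad ω (i:ℕ) : ℝ) + Rp ω ((i:ℕ)+1) β := by
    rw [Rp_succ]; ring
  have hb := hR ((i:ℕ)+1) (Nat.le_add_left 1 _) hin
  rw [digit, hiter i (le_of_lt hin), hkey, floor_nat_add hb.1 hb.2]
  rw [show pad ω (i:ℕ) = ω i from by rw [pad]; rw [dif_pos hin]]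
  exact Int.toNat_natCast _

end BetaAux
-- extra aux
namespace BetaAux
variable {n : ℕ} {ω : Fin n → ℕ}

lemma Rp_div (j : ℕ) {β : ℝ} (hβ : 0 < β) :
    Rp ω j β = β ^ j * (1 - ∑ i ∈ Finset.range j, (pad ω i : ℝ) / β ^ (i + 1)) := by
  rw [Rp, mul_sub, mul_one, Finset.mul_sum]
  congr 1
  refine Finset.sum_congr rfl fun i hi => ?_
  have hi' : i < j := Finset.mem_range.mp hi
  have hpow : β ^ (j - 1 - i) = β ^ j / β ^ (i + 1) := by
    rw [show j - 1 - i = j - (i + 1) from by omega, pow_sub₀ β (ne_of_gt hβ) (by omega)]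
    exact (div_eq_mul_inv _ _).symm
  rw [hpow]
  field_simp

lemma Rp_nonneg_mono {β γ : ℝ} (hβ : 1 < β) (hβγ : β ≤ γ) (j : ℕ)
    (h : 0 ≤ Rp ω j β) : 0 ≤ Rp ω j γ := by
  have hβ0 : 0 < β := by linarith
  have hγ0 : 0 < γ := by linarith
  rw [Rp_div j hβ0] at h
  rw [Rp_div j hγ0]
  have hs : ∑ i ∈ Finset.range j, (pad ω i : ℝ) / γ ^ (i + 1)
      ≤ ∑ i ∈ Finset.range j, (pad ω i : ℝ) / β ^ (i + 1) := by
    refine Finset.sum_le_sum fun i _ => ?_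
    exact div_le_div_of_nonneg_left (Nat.cast_nonneg _) (pow_pos hβ0 _)
      (pow_le_pow_left₀ (le_of_lt hβ0) hβγ _)
  have hpow : 0 < β ^ j := pow_pos hβ0 _
  have hSβ : ∑ i ∈ Finset.range j, (pad ω i : ℝ) / β ^ (i + 1) ≤ 1 := by nlinarith
  exact mul_nonneg (le_of_lt (pow_pos hγ0 _)) (by linarith)

lemma digit_zero' (β : ℝ) : digit β 1 0 = (⌊β⌋).toNat := by simp [digit]

end BetaAux


open BetaAux in

theorem expansion_of_right_endpoint (n k : ℕ) (ω : Fin n → ℕ)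
    (hsa : selfAdmissible ω) (hτ : tau ω = k) (hne : (cylP n ω).Nonempty) :
    ∀ j : ℕ, digit (sSup (cylP n ω)) 1 j =
      if j + 1 < k then pad ω j else if j + 1 = k then pad ω j + 1 else 0 := by
  rcases Nat.eq_zero_or_pos n with hn0 | hn
  · subst hn0
    have hk0 : k = 0 := by
      rw [← hτ]
      unfold tau
      have hset : ({m | 1 ≤ m ∧ m < 0 ∧ ∀ j, j < 0 - m → pad ω (m + j) = pad ω j} ∪ {0} : Set ℕ)
          = {0} := by
        ext m
        simp only [Set.mem_union, Set.mem_setOf_eq, Set.mem_singleton_iff]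
        constructor
        · rintro (⟨_, h2, _⟩ | h)
          · exact absurd h2 (Nat.not_lt_zero m)
          · exact h
        · intro h; exact Or.inr h
      rw [hset, csInf_singleton]
    subst hk0
    have hcyl : cylP 0 ω = Set.Ioi 1 := by
      ext β
      simp [cylP, Set.mem_Ioi]
    intro j
    rw [hcyl, Real.sSup_of_not_bddAbove (not_bddAbove_Ioi 1)]
    simp [digit]
  · obtain ⟨β₀, hβ₀⟩ := id hne
    have hβ₀1 : 1 < β₀ := hβ₀.1
    have hkmem : k ∈ ({m | 1 ≤ m ∧ m < n ∧ ∀ j, j < n - m → pad ω (m + j) = pad ω j} ∪ {n} :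
        Set ℕ) := by
      rw [← hτ]; exact Nat.sInf_mem ⟨n, Or.inr rfl⟩
    have hk1 : 1 ≤ k := by
      rcases hkmem with h | h
      · exact h.1
      · simp only [Set.mem_singleton_iff] at h; omega
    have hkn : k ≤ n := by
      rcases hkmem with h | h
      · exact le_of_lt h.2.1
      · simp only [Set.mem_singleton_iff] at h; omega
    have hper : k < n → ∀ j, j < n - k → pad ω (k + j) = pad ω j := by
      intro hlt
      rcases hkmem with h | h
      · exact h.2.2
      · simp only [Set.mem_singleton_iff] at h; omega
    have hmin : ∀ r, 1 ≤ r → r < n → (∀ j, j < n - r → pad ω (r + j) = pad ω j) → k ≤ r := by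
      intro r h1 h2 h3
      rw [← hτ]
      exact Nat.sInf_le (Or.inl ⟨h1, h2, h3⟩)
    have hbdd : BddAbove (cylP n ω) := by
      refine ⟨(pad ω 0 : ℝ) + 1, fun β hβ => ?_⟩
      have h0 : (⌊β⌋).toNat = pad ω 0 := by
        rw [← digit_zero' β, hβ.2 ⟨0, hn⟩, pad, dif_pos hn]
      have hfle : (⌊β⌋ : ℤ) = (pad ω 0 : ℤ) := by
        rw [← h0, Int.toNat_of_nonneg (Int.floor_nonneg.mpr (by linarith [hβ.1]))]
      have hlt := Int.lt_floor_add_one β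
      rw [hfle] at hlt
      push_cast at hlt
      linarith
    set b := sSup (cylP n ω) with hbdef
    have hβ₀b : β₀ ≤ b := le_csSup hbdd hβ₀
    have hb1 : 1 < b := lt_of_lt_of_le hβ₀1 hβ₀b
    have hbcl : b ∈ closure (cylP n ω) := (Real.isLUB_sSup hne hbdd).mem_closure hne
    have hB : ∀ j, 1 ≤ j → j ≤ n → 0 ≤ Rp ω j b ∧ Rp ω j b ≤ 1 := by
      intro j h1 h2
      have hsub : cylP n ω ⊆ Rp ω j ⁻¹' Set.Icc 0 1 := fun β hβ => by
        have hx := cyl_Rp_bounds hβ j h1 h2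
        exact ⟨hx.1, le_of_lt hx.2⟩
      have hcl : IsClosed (Rp ω j ⁻¹' Set.Icc (0:ℝ) 1) := isClosed_Icc.preimage (Rp_continuous j)
      have hx := closure_minimal hsub hcl hbcl
      exact ⟨hx.1, hx.2⟩
    have hZ : ∀ m, Rp ω m b = 0 → ∀ j, m ≤ j → j ≤ n → Rp ω j b = 0 := by
      intro m h0 j
      induction j with
      | zero =>
        intro hmj _
        have hm0 : m = 0 := Nat.le_zero.mp hmj
        subst hm0; exact h0
      | succ j ih =>
        intro hmj hjn
        rcases eq_or_lt_of_le hmj with heq | hlt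
        · exact heq ▸ h0
        · have hj : Rp ω j b = 0 := ih (by omega) (by omega)
          have hrec : Rp ω (j + 1) b = -(pad ω j : ℝ) := by rw [Rp_succ, hj]; ring
          have hge := (hB (j + 1) (by omega) hjn).1
          rw [hrec] at hge
          have hpz : (pad ω j : ℝ) = 0 := by
            have hnn : (0:ℝ) ≤ (pad ω j : ℝ) := Nat.cast_nonneg _
            linarith
          rw [hrec, hpz, neg_zero]
    have hlex : ∀ r, 1 ≤ r → r < k →
        ∃ p, p + r < n ∧ (∀ j, j < p → pad ω (j + r) = pad ω j) ∧ pad ω (p + r) < pad ω p := by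
      intro r h1 hrk
      have hrn : r < n := lt_of_lt_of_le hrk hkn
      rcases hsa r h1 hrn with hlt | heq
      · obtain ⟨p, hpre, hp⟩ := hlt
        simp only [trunc] at hp hpre
        have hpn : p < n - r := by
          by_contra hcon
          rw [if_neg (by omega)] at hp
          exact Nat.not_lt_zero _ hp
        rw [if_pos hpn] at hp
        refine ⟨p, by omega, fun j hj => ?_, hp⟩
        have hx := hpre j hj
        rwa [if_pos (by omega)] at hx
      · exfalso
        have hper' : ∀ j, j < n - r → pad ω (r + j) = pad ω j := by
          intro j hj
          have hx := congrFun heq j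
          simp only [trunc] at hx
          rwa [if_pos hj, Nat.add_comm] at hx
        have := hmin r h1 hrn hper'
        omega
    have hC : ∀ r, 1 ≤ r → r < k → Rp ω r b < 1 := by
      intro r h1 hrk
      have hrn : r ≤ n := le_trans (le_of_lt hrk) hkn
      refine lt_of_le_of_ne (hB r h1 hrn).2 ?_
      intro heq
      obtain ⟨p, hpn, hpre, hplt⟩ := hlex r h1 hrk
      have hshift : ∀ j, j ≤ p → Rp ω (r + j) b = Rp ω j b := by
        intro j hj
        induction j with
        | zero => rw [Nat.add_zero, Rp_zero]; exact heq
        | succ j ih =>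
          have ihj := ih (by omega)
          rw [show r + (j + 1) = (r + j) + 1 from rfl, Rp_succ, ihj,
            show pad ω (r + j) = pad ω j from by rw [Nat.add_comm]; exact hpre j (by omega),
            ← Rp_succ]
      have h1' : Rp ω (r + p + 1) b = b * Rp ω p b - (pad ω (p + r) : ℝ) := by
        rw [Rp_succ, hshift p le_rfl, show r + p = p + r from Nat.add_comm r p]
      have hgap : (pad ω (p + r) : ℝ) + 1 ≤ (pad ω p : ℝ) := by exact_mod_cast hplt
      have hge : Rp ω (p + 1) b + 1 ≤ Rp ω (r + p + 1) b := by
        rw [h1', Rp_succ]; linarith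
      have hub := (hB (r + p + 1) (by omega) (by omega)).2
      have h0le := (hB (p + 1) (by omega) (by omega)).1
      have hp0 : Rp ω (p + 1) b = 0 := by linarith
      have hz := hZ (p + 1) hp0 (r + p + 1) (by omega) (by omega)
      rw [hz] at hge
      linarith
    have hRk : Rp ω k b = 1 := by
      by_contra hne2
      have hRklt : Rp ω k b < 1 := lt_of_le_of_ne (hB k hk1 hkn).2 hne2
      have hall : ∀ j, 1 ≤ j → j ≤ n → Rp ω j b < 1 := by
        intro j
        induction j using Nat.strong_induction_on with
        | _ j ih =>
          intro h1 hjn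
          rcases lt_trichotomy j k with h | h | h
          · exact hC j h1 h
          · exact h ▸ hRklt
          · have hkn' : k < n := lt_of_lt_of_le h hjn
            have hper' := hper hkn'
            have hE : ∀ s, k + s ≤ n → Rp ω (k + s) b = Rp ω s b - b ^ s * (1 - Rp ω k b) := by
              intro s
              induction s with
              | zero => intro _; rw [Nat.add_zero, Rp_zero]; ring
              | succ s ihs =>
                intro hsn
                have hx := ihs (by omega)
                rw [show k + (s + 1) = (k + s) + 1 from rfl, Rp_succ, hx,
                  show pad ω (k + s) = pad ω s from hper' s (by omega), Rp_succ]
                ring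
            have hEj := hE (j - k) (by omega)
            rw [show k + (j - k) = j from by omega] at hEj
            have hlt2 : Rp ω (j - k) b < 1 := ih (j - k) (by omega) (by omega) (by omega)
            have hbpos : (0:ℝ) < b ^ (j - k) := pow_pos (by linarith) _
            nlinarith
      have hev1 : ∀ᶠ β in 𝓝 b, ∀ j ∈ Finset.Icc 1 n, Rp ω j β < 1 := by
        rw [eventually_all_finset]
        intro j hj
        simp only [Finset.mem_Icc] at hj
        exact ((Rp_continuous j).continuousAt (x := b)).eventually_lt continuousAt_const
          (hall j hj.1 hj.2)
      have hev2 : ∀ᶠ β in 𝓝 b, 1 < β := lt_mem_nhds hb1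
      have hev := (hev1.and hev2).filter_mono (nhdsWithin_le_nhds (s := Set.Ioi b))
      have hself : ∀ᶠ β in 𝓝[>] b, β ∈ Set.Ioi b := self_mem_nhdsWithin
      obtain ⟨β₁, ⟨h1all, hβ₁1⟩, hβ₁b⟩ := (hev.and hself).exists
      have hmem : β₁ ∈ cylP n ω := by
        refine mem_cyl hβ₁1 fun j h1 h2 => ⟨?_, h1all j (Finset.mem_Icc.mpr ⟨h1, h2⟩)⟩
        exact Rp_nonneg_mono hβ₀1 (le_trans hβ₀b (le_of_lt hβ₁b)) j
          (cyl_Rp_bounds hβ₀ j h1 h2).1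
      have hle := le_csSup hbdd hmem
      rw [← hbdef] at hle
      exact absurd hle (not_le.mpr hβ₁b)
    have hfinal : ∀ j, (Tb b)^[j] 1 = if j < k then Rp ω j b else 0 := by
      intro j
      induction j with
      | zero => rw [if_pos (by omega)]; simp [Rp_zero]
      | succ j ih =>
        rw [Function.iterate_succ_apply']
        rcases lt_trichotomy (j + 1) k with h | h | h
        · rw [if_pos h, ih, if_pos (by omega), Tb]
          have hkey : b * Rp ω j b = (pad ω j : ℝ) + Rp ω (j + 1) b := by rw [Rp_succ]; ring
          have hb0 := (hB (j + 1) (by omega) (by omega)).1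
          have hb1' := hC (j + 1) (by omega) h
          rw [hkey, floor_nat_add hb0 hb1']
          push_cast; ring
        · rw [if_neg (by omega), ih, if_pos (by omega), Tb]
          have hkey : b * Rp ω j b = (pad ω j : ℝ) + 1 := by
            have hx := Rp_succ (ω := ω) j b
            rw [show j + 1 = k from h, hRk] at hx
            linarith
          rw [hkey, show (pad ω j : ℝ) + 1 = ((pad ω j + 1 : ℕ) : ℝ) from by push_cast; ring,
            Int.floor_natCast]
          push_cast; ring
        · rw [if_neg (by omega), ih, if_neg (by omega), Tb]
          norm_num
    intro j
    rw [digit]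
    rcases lt_trichotomy (j + 1) k with h | h | h
    · rw [if_pos h, hfinal j, if_pos (by omega)]
      have hkey : b * Rp ω j b = (pad ω j : ℝ) + Rp ω (j + 1) b := by rw [Rp_succ]; ring
      have hb0 := (hB (j + 1) (by omega) (by omega)).1
      have hb1' := hC (j + 1) (by omega) h
      rw [hkey, floor_nat_add hb0 hb1']
      exact Int.toNat_natCast _
    · rw [if_neg (by omega), if_pos h, hfinal j, if_pos (by omega)]
      have hkey : b * Rp ω j b = (pad ω j : ℝ) + 1 := by
        have hx := Rp_succ (ω := ω) j b
        rw [show j + 1 = k from h, hRk] at hx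
        linarith
      rw [hkey, show (pad ω j : ℝ) + 1 = ((pad ω j + 1 : ℕ) : ℝ) from by push_cast; ring,
        Int.floor_natCast]
      exact Int.toNat_natCast _
    · rw [if_neg (by omega), if_neg (by omega), hfinal j, if_neg (by omega)]
      norm_num
end

section
/- For any self-admissible word ω of length n, the left endpoint of the parameter cylinder of its lexicographic successor ω⁺ in Λ_n equals the right endpoint of the parameter cylinder of ω: β̲(ω⁺) = β̄(ω). Consequently, the parameter cylinders I_n^P(ω) for ω ∈ Λ_n are pairwise disjoint. -/
open Filter Topology

/-!
Digits of `1` are monotone in the base: if `β ≤ β'` and the first `k` digits agree, then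
`β T_β^k 1 ≤ β' T_{β'}^k 1`, so the next digit of `β` is at most that of `β'`. Hence
`β ↦ ε_1(1,β) ⋯ ε_n(1,β)` is lexicographically monotone, the cylinder of `ω` lies to the left
of that of `ω⁺`, and any parameter `β` between them has a self-admissible prefix `u` with
`ω ≤ u ≤ ω⁺`. Minimality of `ω⁺` forces `u ∈ {ω, ω⁺}`, so there is no gap between the cylinders.
-/

open Set

section LexOrder

theorem lexLe_iff_toLex_le (a b : ℕ → ℕ) : lexLe a b ↔ toLex a ≤ toLex b := by
  rw [le_iff_lt_or_eq, toLex_inj]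
  rfl

theorem toLex_le_of_forall_le_of_eq_before {a b : ℕ → ℕ}
    (h : ∀ k, (∀ j < k, a j = b j) → a k ≤ b k) : toLex a ≤ toLex b :=
  le_of_not_gt fun ⟨k, hagree, hk⟩ => (h k fun j hj => (hagree j hj).symm).not_gt hk

theorem pad_injective {n : ℕ} : Function.Injective (pad (n := n)) := fun u v h =>
  funext fun i => by simpa [pad] using congrFun h i

theorem wordLt_iff_toLex_lt {n : ℕ} (u v : Fin n → ℕ) :
    wordLt u v ↔ toLex (pad u) < toLex (pad v) := Iff.rfl

theorem wordLe_iff_toLex_le {n : ℕ} (u v : Fin n → ℕ) :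
    wordLe u v ↔ toLex (pad u) ≤ toLex (pad v) := by
  rw [le_iff_lt_or_eq, toLex_inj, pad_injective.eq_iff]
  rfl

end LexOrder

section Digits

noncomputable def paddedDigits (β x : ℝ) (m : ℕ) : ℕ → ℕ :=
  fun k => if k < m then digit β x k else 0

variable {β β' x y : ℝ}

theorem Tb_iterate_nonneg (β : ℝ) {x : ℝ} (hx : 0 ≤ x) : ∀ k, 0 ≤ (Tb β)^[k] x
  | 0 => hx
  | k + 1 => by
    rw [Function.iterate_succ_apply']
    exact Int.fract_nonneg _

theorem Tb_iterate_lt_one (β x : ℝ) {k : ℕ} (hk : 1 ≤ k) : (Tb β)^[k] x < 1 := by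
  obtain ⟨j, rfl⟩ := Nat.exists_eq_add_of_le' hk
  rw [Function.iterate_succ_apply']
  exact Int.fract_lt_one _

theorem digit_Tb_iterate (β x : ℝ) (i k : ℕ) : digit β ((Tb β)^[i] x) k = digit β x (k + i) := by
  simp only [digit, ← Function.iterate_add_apply]

theorem mul_Tb_iterate_le_of_digit_eq (hβ : 0 < β) (hββ' : β ≤ β') (hx : 0 ≤ x) (hxy : x ≤ y) :
    ∀ k, (∀ j < k, digit β x j = digit β' y j) → β * (Tb β)^[k] x ≤ β' * (Tb β')^[k] y
  | 0, _ => mul_le_mul hββ' hxy hx (hβ.trans_le hββ').le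
  | k + 1, h => by
    have ih := mul_Tb_iterate_le_of_digit_eq hβ hββ' hx hxy k fun j hj =>
      h j (hj.trans k.lt_succ_self)
    have hfloor_nonneg : 0 ≤ ⌊β * (Tb β)^[k] x⌋ :=
      Int.floor_nonneg.mpr (mul_nonneg hβ.le (Tb_iterate_nonneg β hx k))
    have hfloor_eq : ⌊β * (Tb β)^[k] x⌋ = ⌊β' * (Tb β')^[k] y⌋ := by
      have hdigit := h k k.lt_succ_self
      have := Int.floor_le_floor ih
      simp only [digit] at hdigit
      omega
    have hiter : (Tb β)^[k + 1] x ≤ (Tb β')^[k + 1] y := by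
      simp only [Function.iterate_succ_apply', Tb, hfloor_eq]
      exact sub_le_sub_right ih _
    exact mul_le_mul hββ' hiter (Tb_iterate_nonneg β hx _) (hβ.trans_le hββ').le

theorem digit_le_of_digit_eq (hβ : 0 < β) (hββ' : β ≤ β') (hx : 0 ≤ x) (hxy : x ≤ y) {k : ℕ}
    (h : ∀ j < k, digit β x j = digit β' y j) : digit β x k ≤ digit β' y k :=
  Int.toNat_le_toNat (Int.floor_le_floor (mul_Tb_iterate_le_of_digit_eq hβ hββ' hx hxy k h))

theorem toLex_paddedDigits_le (m : ℕ) (hβ : 0 < β) (hββ' : β ≤ β') (hx : 0 ≤ x) (hxy : x ≤ y) :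
    toLex (paddedDigits β x m) ≤ toLex (paddedDigits β' y m) := by
  refine toLex_le_of_forall_le_of_eq_before fun k hagree => ?_
  unfold paddedDigits
  split_ifs with hk
  · refine digit_le_of_digit_eq hβ hββ' hx hxy fun j hj => ?_
    simpa [paddedDigits, hj.trans hk] using hagree j hj
  · exact le_rfl

end Digits

section Cylinders

variable {n : ℕ} {β β' : ℝ}

theorem pad_prefixW (β : ℝ) (n : ℕ) : pad (prefixW β n) = paddedDigits β 1 n := by
  ext k
  simp [pad, prefixW, paddedDigits]

theorem toLex_pad_prefixW_mono (hβ : 0 < β) (hββ' : β ≤ β') :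
    toLex (pad (prefixW β n)) ≤ toLex (pad (prefixW β' n)) := by
  simpa only [pad_prefixW] using toLex_paddedDigits_le n hβ hββ' zero_le_one le_rfl

theorem prefixW_selfAdmissible (hβ : 1 < β) : selfAdmissible (prefixW β n) := by
  intro i hi hin
  have hshift : (fun k => pad (prefixW β n) (k + i)) = paddedDigits β ((Tb β)^[i] 1) (n - i) := by
    ext k
    simp only [pad_prefixW, paddedDigits, digit_Tb_iterate]
    congr 1
    exact propext (by omega)
  have htrunc : trunc (prefixW β n) (n - i) = paddedDigits β 1 (n - i) := by
    ext k
    simp only [trunc, pad_prefixW, paddedDigits]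
    split_ifs <;> first | rfl | omega
  rw [lexLe_iff_toLex_le, hshift, htrunc]
  exact toLex_paddedDigits_le _ (zero_lt_one.trans hβ) le_rfl (Tb_iterate_nonneg β zero_le_one i)
    (Tb_iterate_lt_one β 1 hi).le

theorem prefixW_eq_of_mem_cylP {ω : Fin n → ℕ} (h : β ∈ cylP n ω) : prefixW β n = ω :=
  funext h.2

theorem mem_cylP_prefixW (hβ : 1 < β) : β ∈ cylP n (prefixW β n) :=
  ⟨hβ, fun _ => rfl⟩

theorem disjoint_cylP {u v : Fin n → ℕ} (huv : u ≠ v) : Disjoint (cylP n u) (cylP n v) :=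
  disjoint_left.mpr fun _ hu hv =>
    huv ((prefixW_eq_of_mem_cylP hu).symm.trans (prefixW_eq_of_mem_cylP hv))

theorem cylP_bddBelow (ω : Fin n → ℕ) : BddBelow (cylP n ω) :=
  ⟨1, fun _ hβ => hβ.1.le⟩

/-- The first digit of `1` is `⌊β⌋`, so `β < ω₁ + 1` on the cylinder of `ω`. -/
theorem cylP_bddAbove (hn : 0 < n) (ω : Fin n → ℕ) : BddAbove (cylP n ω) := by
  refine ⟨ω ⟨0, hn⟩ + 1, fun β ⟨hβ, hdigits⟩ => ?_⟩
  have hfloor : ⌊β⌋ = ω ⟨0, hn⟩ := by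
    have h0 := hdigits ⟨0, hn⟩
    have : 0 ≤ ⌊β⌋ := Int.floor_nonneg.mpr (zero_le_one.trans hβ.le)
    simp only [digit, Function.iterate_zero, id, mul_one] at h0
    omega
  have := Int.lt_floor_add_one β
  rw [hfloor] at this
  exact_mod_cast this.le

theorem le_of_mem_cylP_of_wordLt {u v : Fin n → ℕ} (huv : wordLt u v) {a b : ℝ}
    (ha : a ∈ cylP n u) (hb : b ∈ cylP n v) : a ≤ b := by
  by_contra! hba
  have := toLex_pad_prefixW_mono (n := n) (zero_lt_one.trans hb.1) hba.le
  rw [prefixW_eq_of_mem_cylP ha, prefixW_eq_of_mem_cylP hb] at this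
  exact this.not_gt ((wordLt_iff_toLex_lt u v).mp huv)

theorem mem_cylP_union_of_le_of_le {ω ωp : Fin n → ℕ}
    (hleast : ∀ u : Fin n → ℕ, selfAdmissible u → wordLt ω u → wordLe ωp u)
    {a b : ℝ} (ha : a ∈ cylP n ω) (hb : b ∈ cylP n ωp) (haβ : a ≤ β) (hβb : β ≤ b) :
    β ∈ cylP n ω ∪ cylP n ωp := by
  have hβ : 1 < β := ha.1.trans_le haβ
  set u := prefixW β n
  have hωu : toLex (pad ω) ≤ toLex (pad u) := by
    simpa only [prefixW_eq_of_mem_cylP ha] using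
      toLex_pad_prefixW_mono (n := n) (zero_lt_one.trans ha.1) haβ
  have huωp : toLex (pad u) ≤ toLex (pad ωp) := by
    simpa only [prefixW_eq_of_mem_cylP hb] using
      toLex_pad_prefixW_mono (n := n) (zero_lt_one.trans hβ) hβb
  by_cases hu : u = ω
  · exact Or.inl (hu ▸ mem_cylP_prefixW hβ)
  · have hlt : wordLt ω u := (wordLt_iff_toLex_lt ω u).mpr <|
      hωu.lt_of_ne fun h => hu (pad_injective (toLex_inj.mp h)).symm
    have hωpu := (wordLe_iff_toLex_le _ _).mp (hleast u (prefixW_selfAdmissible hβ) hlt)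
    have : u = ωp := pad_injective (toLex_inj.mp (huωp.antisymm hωpu))
    exact Or.inr (this ▸ mem_cylP_prefixW hβ)

end Cylinders

theorem succ_left_endpoint_eq_right_endpoint_general (n : ℕ) (ω ωp : Fin n → ℕ)
    (hlt : wordLt ω ωp)
    (hleast : ∀ u : Fin n → ℕ, selfAdmissible u → wordLt ω u → wordLe ωp u)
    (hne : (cylP n ω).Nonempty) (hnep : (cylP n ωp).Nonempty) :
    sInf (cylP n ωp) = sSup (cylP n ω) ∧
      ∀ u v : Fin n → ℕ, selfAdmissible u → selfAdmissible v → u ≠ v →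
        Disjoint (cylP n u) (cylP n v) := by
  refine ⟨le_antisymm ?_ ?_, fun u v _ _ => disjoint_cylP⟩
  · have hn : 0 < n := by
      obtain ⟨k, -, hk⟩ := hlt
      by_contra! h
      simp [pad, Nat.le_zero.mp h] at hk
    obtain ⟨a, ha⟩ := hne
    obtain ⟨b, hb⟩ := hnep
    by_contra! hgap
    obtain ⟨β, hsup, hinf⟩ := exists_between hgap
    have hβ := mem_cylP_union_of_le_of_le hleast ha hb
      ((le_csSup (cylP_bddAbove hn ω) ha).trans hsup.le)
      (hinf.le.trans (csInf_le (cylP_bddBelow ωp) hb))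
    rcases hβ with hβ | hβ
    · exact hsup.not_ge (le_csSup (cylP_bddAbove hn ω) hβ)
    · exact hinf.not_ge (csInf_le (cylP_bddBelow ωp) hβ)
  · exact csSup_le hne fun a ha => le_csInf hnep fun b hb => le_of_mem_cylP_of_wordLt hlt ha hb

theorem succ_left_endpoint_eq_right_endpoint (n : ℕ) (ω ωp : Fin n → ℕ)
    (hsa : selfAdmissible ω) (hsap : selfAdmissible ωp) (hlt : wordLt ω ωp)
    (hleast : ∀ u : Fin n → ℕ, selfAdmissible u → wordLt ω u → wordLe ωp u)
    (hne : (cylP n ω).Nonempty) (hnep : (cylP n ωp).Nonempty) :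
    sInf (cylP n ωp) = sSup (cylP n ω) ∧
      ∀ u v : Fin n → ℕ, selfAdmissible u → selfAdmissible v → u ≠ v →
        Disjoint (cylP n u) (cylP n v) :=
  succ_left_endpoint_eq_right_endpoint_general n ω ωp hlt hleast hne hnep
end

section
/- For every β > 1, the left endpoints β̲_n of the cylinders I_n^P(β) increase to β and the right endpoints β̄_n decrease to β as n → ∞. -/
open Filter Topology

namespace EndpointsAux


lemma iter_nonneg (γ : ℝ) (n : ℕ) : 0 ≤ (Tb γ)^[n] (1:ℝ) := by
  cases n with
  | zero => norm_num
  | succ m =>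
    rw [Function.iterate_succ_apply']
    exact Int.fract_nonneg _

lemma iter_le_one (γ : ℝ) (n : ℕ) : (Tb γ)^[n] (1:ℝ) ≤ 1 := by
  cases n with
  | zero => norm_num
  | succ m =>
    rw [Function.iterate_succ_apply']
    exact le_of_lt (Int.fract_lt_one _)

lemma digit_cast (γ : ℝ) (hγ : 0 < γ) (n : ℕ) :
    (digit γ 1 n : ℝ) = ((⌊γ * (Tb γ)^[n] 1⌋ : ℤ) : ℝ) := by
  have h0 : (0:ℤ) ≤ ⌊γ * (Tb γ)^[n] 1⌋ :=
    Int.floor_nonneg.2 (mul_nonneg hγ.le (iter_nonneg γ n))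
  rw [digit]
  exact_mod_cast congrArg (Int.cast : ℤ → ℝ) (Int.toNat_of_nonneg h0)

lemma telescope (γ : ℝ) (hγ : 0 < γ) (n : ℕ) :
    (Tb γ)^[n] (1:ℝ) = γ^n - ∑ i ∈ Finset.range n, (digit γ 1 i : ℝ) * γ^(n-1-i) := by
  induction n with
  | zero => simp
  | succ m ih =>
    rw [Function.iterate_succ_apply']
    have hfl : Tb γ ((Tb γ)^[m] 1) = γ * (Tb γ)^[m] 1 - (digit γ 1 m : ℝ) := by
      rw [Tb, digit_cast γ hγ m]
    rw [hfl, ih, Finset.sum_range_succ]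
    have hexp : ∀ i ∈ Finset.range m,
        (digit γ 1 i : ℝ) * γ^(m+1-1-i) = ((digit γ 1 i : ℝ) * γ^(m-1-i)) * γ := by
      intro i hi
      have hi' := Finset.mem_range.1 hi
      have he : m + 1 - 1 - i = (m - 1 - i) + 1 := by omega
      rw [he, pow_succ]; ring
    rw [Finset.sum_congr rfl hexp, ← Finset.sum_mul]
    have h0 : m + 1 - 1 - m = 0 := by omega
    rw [h0, pow_zero, pow_succ]
    ring

lemma sum_eq (γ : ℝ) (hγ0 : 0 < γ) (n : ℕ) :
    ∑ i ∈ Finset.range n, (digit γ 1 i : ℝ) * (γ^(i+1))⁻¹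
      = 1 - (Tb γ)^[n] 1 / γ^n := by
  have hne : γ^n ≠ 0 := (pow_pos hγ0 n).ne'
  have hterm : ∀ i ∈ Finset.range n, (digit γ 1 i : ℝ) * (γ^(i+1))⁻¹
      = (digit γ 1 i : ℝ) * γ^(n-1-i) / γ^n := by
    intro i hi
    have hi' := Finset.mem_range.1 hi
    have hid : γ^n = γ^(i+1) * γ^(n-1-i) := by rw [← pow_add]; congr 1; omega
    have h2 : (γ^(i+1))⁻¹ = γ^(n-1-i) / γ^n := by
      rw [eq_div_iff hne, hid, inv_mul_cancel_left₀ (pow_ne_zero _ hγ0.ne')]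
    rw [h2, mul_div_assoc]
  rw [Finset.sum_congr rfl hterm, ← Finset.sum_div]
  have hsum : ∑ i ∈ Finset.range n, (digit γ 1 i : ℝ) * γ^(n-1-i)
      = γ^n - (Tb γ)^[n] 1 := by
    have := telescope γ hγ0 n; linarith
  rw [hsum, sub_div, div_self hne]

lemma digit_zero (γ : ℝ) : digit γ 1 0 = (⌊γ⌋).toNat := by
  simp [digit]

lemma one_le_digit_zero (γ : ℝ) (hγ : 1 < γ) : 1 ≤ digit γ 1 0 := by
  rw [digit_zero]
  have : (1:ℤ) ≤ ⌊γ⌋ := Int.le_floor.2 (by exact_mod_cast hγ.le)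
  omega

-- sum bounds for any γ > 1
lemma S_le_one (γ : ℝ) (hγ : 1 < γ) (n : ℕ) :
    ∑ i ∈ Finset.range n, (digit γ 1 i : ℝ) * (γ^(i+1))⁻¹ ≤ 1 := by
  have hγ0 : (0:ℝ) < γ := lt_trans one_pos hγ
  rw [sum_eq γ hγ0 n]
  have h1 : 0 ≤ (Tb γ)^[n] 1 / γ^n := div_nonneg (iter_nonneg γ n) (pow_pos hγ0 n).le
  linarith

lemma S_ge (γ : ℝ) (hγ : 1 < γ) (n : ℕ) :
    1 - (γ^n)⁻¹ ≤ ∑ i ∈ Finset.range n, (digit γ 1 i : ℝ) * (γ^(i+1))⁻¹ := by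
  have hγ0 : (0:ℝ) < γ := lt_trans one_pos hγ
  rw [sum_eq γ hγ0 n]
  have h1 : (Tb γ)^[n] 1 / γ^n ≤ (γ^n)⁻¹ := by
    rw [div_le_iff₀ (pow_pos hγ0 n)]
    rw [inv_mul_cancel₀ (pow_pos hγ0 n).ne']
    exact iter_le_one γ n
  linarith

/-- Core gap bound: if `x ≤ y` both > 1 share the first `n ≥ 1` digits of β, then
`y - x ≤ x*y*(y^n)⁻¹`. -/
lemma gap_bound (β : ℝ) (n : ℕ) (hn : 1 ≤ n) (x y : ℝ) (hx : 1 < x) (hxy : x ≤ y)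
    (hdx : ∀ i, i < n → digit x 1 i = digit β 1 i)
    (hdy : ∀ i, i < n → digit y 1 i = digit β 1 i) :
    y - x ≤ x * y * (y^n)⁻¹ := by
  have hy : 1 < y := lt_of_lt_of_le hx hxy
  have hx0 : (0:ℝ) < x := lt_trans one_pos hx
  have hy0 : (0:ℝ) < y := lt_trans one_pos hy
  set Sx := ∑ i ∈ Finset.range n, (digit β 1 i : ℝ) * (x^(i+1))⁻¹ with hSx
  set Sy := ∑ i ∈ Finset.range n, (digit β 1 i : ℝ) * (y^(i+1))⁻¹ with hSy
  have hSxe : Sx = ∑ i ∈ Finset.range n, (digit x 1 i : ℝ) * (x^(i+1))⁻¹ := by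
    apply Finset.sum_congr rfl
    intro i hi; rw [hdx i (Finset.mem_range.1 hi)]
  have hSye : Sy = ∑ i ∈ Finset.range n, (digit y 1 i : ℝ) * (y^(i+1))⁻¹ := by
    apply Finset.sum_congr rfl
    intro i hi; rw [hdy i (Finset.mem_range.1 hi)]
  have h1 : Sx ≤ 1 := by rw [hSxe]; exact S_le_one x hx n
  have h2 : 1 - (y^n)⁻¹ ≤ Sy := by rw [hSye]; exact S_ge y hy n
  -- Sx - Sy ≥ x⁻¹ - y⁻¹
  have h3 : x⁻¹ - y⁻¹ ≤ Sx - Sy := by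
    have hsub : Sx - Sy
        = ∑ i ∈ Finset.range n, (digit β 1 i : ℝ) * ((x^(i+1))⁻¹ - (y^(i+1))⁻¹) := by
      rw [hSx, hSy, ← Finset.sum_sub_distrib]
      apply Finset.sum_congr rfl
      intro i _; ring
    rw [hsub]
    have hnonneg : ∀ i ∈ Finset.range n,
        0 ≤ (digit β 1 i : ℝ) * ((x^(i+1))⁻¹ - (y^(i+1))⁻¹) := by
      intro i _
      apply mul_nonneg (Nat.cast_nonneg _)
      have : y⁻¹ ≤ x⁻¹ := inv_anti₀ hx0 hxy
      have hpow : x^(i+1) ≤ y^(i+1) := pow_le_pow_left₀ hx0.le hxy _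
      have := inv_anti₀ (pow_pos hx0 _) hpow
      linarith
    have h0mem : 0 ∈ Finset.range n := Finset.mem_range.2 hn
    have hsingle := Finset.single_le_sum hnonneg h0mem
    have hd0 : (1:ℝ) ≤ (digit β 1 0 : ℝ) := by
      have hd := hdx 0 hn
      have := one_le_digit_zero x hx
      rw [hd] at this
      exact_mod_cast this
    have hterm0 : x⁻¹ - y⁻¹ ≤ (digit β 1 0 : ℝ) * ((x^(0+1))⁻¹ - (y^(0+1))⁻¹) := by
      simp only [zero_add, pow_one]
      have hnn : 0 ≤ x⁻¹ - y⁻¹ := by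
        have : y⁻¹ ≤ x⁻¹ := inv_anti₀ hx0 hxy
        linarith
      calc x⁻¹ - y⁻¹ ≤ 1 * (x⁻¹ - y⁻¹) := by rw [one_mul]
        _ ≤ (digit β 1 0 : ℝ) * (x⁻¹ - y⁻¹) := mul_le_mul_of_nonneg_right hd0 hnn
    exact le_trans hterm0 hsingle
  have h4 : x⁻¹ - y⁻¹ ≤ (y^n)⁻¹ := by linarith
  have e1 : x * y * x⁻¹ = y := by field_simp
  have e2 : x * y * y⁻¹ = x := by field_simp
  have e3 : y - x = x * y * (x⁻¹ - y⁻¹) := by rw [mul_sub, e1, e2]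
  rw [e3]
  exact mul_le_mul_of_nonneg_left h4 (by positivity)

lemma mem_self (β : ℝ) (hβ : 1 < β) (n : ℕ) : β ∈ cylP n (prefixW β n) :=
  ⟨hβ, fun _ => rfl⟩

lemma nested (β : ℝ) (n : ℕ) :
    cylP (n+1) (prefixW β (n+1)) ⊆ cylP n (prefixW β n) := by
  rintro γ ⟨hγ, hdig⟩
  exact ⟨hγ, fun i => hdig ⟨i.1, Nat.lt_succ_of_lt i.2⟩⟩

lemma mem_digits (β : ℝ) (n : ℕ) (γ : ℝ) (hγ : γ ∈ cylP n (prefixW β n)) :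
    ∀ i, i < n → digit γ 1 i = digit β 1 i := fun i hi => hγ.2 ⟨i, hi⟩

lemma mem_lt (β : ℝ) (hβ : 1 < β) (n : ℕ) (hn : 1 ≤ n) (γ : ℝ)
    (hγ : γ ∈ cylP n (prefixW β n)) : γ < β + 1 := by
  have h1 : 1 < γ := hγ.1
  have hd := mem_digits β n γ hγ 0 hn
  rw [digit_zero, digit_zero] at hd
  have hfγ : (1:ℤ) ≤ ⌊γ⌋ := Int.le_floor.2 (by exact_mod_cast h1.le)
  have hfβ : (1:ℤ) ≤ ⌊β⌋ := Int.le_floor.2 (by exact_mod_cast hβ.le)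
  have hfe : ⌊γ⌋ = ⌊β⌋ := by omega
  have h2 : γ < (⌊γ⌋ : ℝ) + 1 := Int.lt_floor_add_one γ
  have h3 : ((⌊β⌋ : ℤ) : ℝ) ≤ β := Int.floor_le β
  rw [hfe] at h2
  linarith

lemma mem_bound (β : ℝ) (hβ : 1 < β) (n : ℕ) (hn : 1 ≤ n) (γ : ℝ)
    (hγ : γ ∈ cylP n (prefixW β n)) : |γ - β| ≤ (β+1)^2 * (β^n)⁻¹ := by
  have h1 : 1 < γ := hγ.1
  have hdγ := mem_digits β n γ hγ
  have hdβ : ∀ i, i < n → digit β 1 i = digit β 1 i := fun _ _ => rfl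
  have hγlt : γ < β + 1 := mem_lt β hβ n hn γ hγ
  have hβ0 : (0:ℝ) < β := lt_trans one_pos hβ
  have hγ0 : (0:ℝ) < γ := lt_trans one_pos h1
  have hprod : γ * β ≤ (β+1)^2 := by nlinarith
  rcases le_total γ β with hle | hle
  · have := gap_bound β n hn γ β h1 hle hdγ hdβ
    rw [abs_sub_comm, abs_of_nonneg (by linarith)]
    calc β - γ ≤ γ * β * (β^n)⁻¹ := this
      _ ≤ (β+1)^2 * (β^n)⁻¹ :=
        mul_le_mul_of_nonneg_right hprod (by positivity)
  · have := gap_bound β n hn β γ hβ hle hdβ hdγ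
    rw [abs_of_nonneg (by linarith)]
    have hpow : (γ^n)⁻¹ ≤ (β^n)⁻¹ :=
      inv_anti₀ (pow_pos hβ0 n) (pow_le_pow_left₀ hβ0.le hle n)
    calc γ - β ≤ β * γ * (γ^n)⁻¹ := this
      _ ≤ β * γ * (β^n)⁻¹ := mul_le_mul_of_nonneg_left hpow (by positivity)
      _ ≤ (β+1)^2 * (β^n)⁻¹ := by
          apply mul_le_mul_of_nonneg_right _ (by positivity)
          nlinarith


end EndpointsAux

open EndpointsAux in
theorem endpoints_converge (β : ℝ) (hβ : 1 < β) :
    (∀ n : ℕ, lEnd β n ≤ lEnd β (n + 1)) ∧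
      Filter.Tendsto (lEnd β) Filter.atTop (nhds β) ∧
      (∀ n : ℕ, 1 ≤ n → rEnd β (n + 1) ≤ rEnd β n) ∧
      Filter.Tendsto (rEnd β) Filter.atTop (nhds β) := by
  have hβ0 : (0:ℝ) < β := lt_trans one_pos hβ
  have hbb : ∀ n, BddBelow (cylP n (prefixW β n)) :=
    fun n => ⟨1, fun γ hγ => hγ.1.le⟩
  have hba : ∀ n, 1 ≤ n → BddAbove (cylP n (prefixW β n)) :=
    fun n hn => ⟨β + 1, fun γ hγ => (mem_lt β hβ n hn γ hγ).le⟩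
  have hne : ∀ n, (cylP n (prefixW β n)).Nonempty := fun n => ⟨β, mem_self β hβ n⟩
  -- endpoint bounds
  have hlow_le : ∀ n, lEnd β n ≤ β := fun n => csInf_le (hbb n) (mem_self β hβ n)
  have hlow_ge : ∀ n, 1 ≤ n → β - (β+1)^2 * (β^n)⁻¹ ≤ lEnd β n := by
    intro n hn
    apply le_csInf (hne n)
    intro γ hγ
    have := mem_bound β hβ n hn γ hγ
    have := abs_le.1 this
    linarith [this.1]
  have hup_ge : ∀ n, 1 ≤ n → β ≤ rEnd β n :=
    fun n hn => le_csSup (hba n hn) (mem_self β hβ n)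
  have hup_le : ∀ n, 1 ≤ n → rEnd β n ≤ β + (β+1)^2 * (β^n)⁻¹ := by
    intro n hn
    apply csSup_le (hne n)
    intro γ hγ
    have := abs_le.1 (mem_bound β hβ n hn γ hγ)
    linarith [this.2]
  -- the error term tends to 0
  have herr : Filter.Tendsto (fun n : ℕ => (β+1)^2 * (β^n)⁻¹) Filter.atTop (nhds 0) := by
    have h1 : Filter.Tendsto (fun n : ℕ => (β⁻¹)^n) Filter.atTop (nhds 0) := by
      apply tendsto_pow_atTop_nhds_zero_of_lt_one (by positivity)
      rw [inv_lt_one_iff₀]; right; exact hβ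
    have h2 := h1.const_mul ((β+1)^2)
    rw [mul_zero] at h2
    convert h2 using 2 with n
    rw [inv_pow]
  refine ⟨?_, ?_, ?_, ?_⟩
  · intro n
    exact csInf_le_csInf (hbb n) (hne (n+1)) (nested β n)
  · have hg : Filter.Tendsto (fun n : ℕ => β - (β+1)^2 * (β^n)⁻¹) Filter.atTop (nhds β) := by
      have := (tendsto_const_nhds (x := β) (f := Filter.atTop (α := ℕ))).sub herr
      simpa using this
    apply tendsto_of_tendsto_of_tendsto_of_le_of_le' hg
      (tendsto_const_nhds (x := β) (f := Filter.atTop (α := ℕ)))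
    · filter_upwards [Filter.eventually_ge_atTop 1] with n hn
      exact hlow_ge n hn
    · exact Filter.Eventually.of_forall hlow_le
  · intro n hn
    exact csSup_le_csSup (hba n hn) (hne (n+1)) (nested β n)
  · have hh : Filter.Tendsto (fun n : ℕ => β + (β+1)^2 * (β^n)⁻¹) Filter.atTop (nhds β) := by
      have := (tendsto_const_nhds (x := β) (f := Filter.atTop (α := ℕ))).add herr
      simpa using this
    apply tendsto_of_tendsto_of_tendsto_of_le_of_le'
      (tendsto_const_nhds (x := β) (f := Filter.atTop (α := ℕ))) hh
    · filter_upwards [Filter.eventually_ge_atTop 1] with n hn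
      exact hup_ge n hn
    · filter_upwards [Filter.eventually_ge_atTop 1] with n hn
      exact hup_le n hn
end
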